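/- arXiv:2110.00049 — 9 statements merged into one kernel-verified Lean document; each statement's English description precedes it below -/
import Mathlib

section
/- Let G be a compact group with normalized Haar measure μ, let r ≥ 1, and let X be a closed symmetric subset of G containing the identity. If μ(X) > 1/(r+1), then the closed subgroup generated by X equals X^{3r}, the set of products of 3r elements of X. -/
open MeasureTheory
open scoped ENNReal Pointwise

/-!
If `X^{n+1} ⊆ X^n` for some `n`, the powers of `X` stabilise at `X^n`, which is then a
subgroup, closed as the product of the compact set `X^{n-1}` and the closed set `X`, hence equal
to the closed subgroup generated by `X`.

If the powers do not stabilise at any `n = 3j + 2` with `j < r`, pick `g_0 = 1` and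
`g_{j+1} ∈ X^{3j+3} \ X^{3j+2}`: the translates `g_j X`, `j ≤ r`, are pairwise disjoint, since
`g_i X ∩ g_j X ≠ ∅` with `i < j` would put `g_j` in `g_i X X⁻¹ ⊆ X^{3j-1}`. These `r + 1` disjoint
translates of measure `μ(X)` contradict `μ(X) > 1/(r+1)`.
-/

namespace Set

variable {G : Type*} [Group G] {X : Set G}

theorem pow_eq_of_pow_succ_subset (h1 : 1 ∈ X) {n m : ℕ} (hstab : X ^ (n + 1) ⊆ X ^ n)
    (hnm : n ≤ m) : X ^ m = X ^ n := by
  obtain ⟨k, rfl⟩ := Nat.exists_eq_add_of_le hnm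
  induction k with
  | zero => rfl
  | succ k ih =>
    refine subset_antisymm ?_ (pow_subset_pow_right h1 (by omega))
    calc X ^ (n + (k + 1)) = X ^ (n + k) * X := by rw [← add_assoc, pow_succ]
      _ = X ^ (n + 1) := by rw [ih (by omega), pow_succ]
      _ ⊆ X ^ n := hstab

theorem disjoint_smul_set_of_notMem_pow_add_two (hsym : X⁻¹ = X) {a b : G} {i : ℕ}
    (ha : a ∈ X ^ i) (hb : b ∉ X ^ (i + 2)) : Disjoint (a • X) (b • X) := by
  refine disjoint_left.2 ?_
  rintro _ ⟨x, hx, rfl⟩ ⟨y, hy, hxy⟩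
  refine hb ?_
  have hy' : y⁻¹ ∈ X := hsym ▸ inv_mem_inv.2 hy
  have hb_eq : b = a * x * y⁻¹ := by
    rw [← show b * y = a * x from hxy, mul_inv_cancel_right]
  rw [hb_eq, pow_succ, pow_succ]
  exact mul_mem_mul (mul_mem_mul ha hx) hy'

end Set

namespace Subgroup

variable {G : Type*} [Group G] {X : Set G}

theorem coe_closure_eq_pow_of_pow_succ_subset (h1 : 1 ∈ X) (hsym : X⁻¹ = X) {n : ℕ}
    (hstab : X ^ (n + 1) ⊆ X ^ n) : (closure X : Set G) = X ^ n := by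
  refine subset_antisymm (fun x hx => ?_) (pow_subset subset_closure)
  induction hx using closure_induction with
  | mem x hx => exact hstab (Set.pow_subset_pow_right (m := 1) h1 (by omega) (by simpa using hx))
  | one => exact Set.one_mem_pow h1
  | mul x y _ _ hx hy =>
    rw [← Set.pow_eq_of_pow_succ_subset h1 hstab (Nat.le_add_right n n), pow_add]
    exact Set.mul_mem_mul hx hy
  | inv x _ hx =>
    rw [← hsym, inv_pow]
    exact Set.inv_mem_inv.2 hx

end Subgroup

theorem IsCompact.pow {G : Type*} [Monoid G] [TopologicalSpace G] [ContinuousMul G] {X : Set G}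
    (hX : IsCompact X) (n : ℕ) : IsCompact (X ^ n) := by
  induction n with
  | zero => simp
  | succ n ih => simpa only [pow_succ] using ih.mul hX

theorem IsClosed.pow_succ_of_isCompact {G : Type*} [Group G] [TopologicalSpace G]
    [IsTopologicalGroup G] {X : Set G} (hX : IsClosed X) (hXc : IsCompact X) (n : ℕ) :
    IsClosed (X ^ (n + 1)) := by
  rw [pow_succ]
  exact hX.mul_left_of_isCompact (hXc.pow n)

theorem Finset.card_mul_measure_le_of_pairwiseDisjoint_smul {G ι : Type*} [Group G]
    [MeasurableSpace G] [MeasurableMul G] (μ : Measure G) [μ.IsMulLeftInvariant] {X : Set G}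
    (hX : MeasurableSet X) {s : Finset ι} {g : ι → G}
    (hdisj : (s : Set ι).PairwiseDisjoint fun i => g i • X) : s.card * μ X ≤ μ Set.univ := by
  calc (s.card : ℝ≥0∞) * μ X = ∑ i ∈ s, μ (g i • X) := by simp
    _ = μ (⋃ i ∈ s, g i • X) :=
      (measure_biUnion_finset hdisj fun i _ => hX.const_smul _).symm
    _ ≤ μ Set.univ := measure_mono (Set.subset_univ _)

theorem exists_pow_succ_subset_of_inv_lt_measure {G : Type*} [Group G] [MeasurableSpace G]
    [MeasurableMul G] (μ : Measure G) [μ.IsMulLeftInvariant] [IsProbabilityMeasure μ]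
    {X : Set G} (hX : MeasurableSet X) (h1 : 1 ∈ X) (hsym : X⁻¹ = X) (r : ℕ)
    (hμ : ((r : ℝ≥0∞) + 1)⁻¹ < μ X) : ∃ j < r, X ^ (3 * j + 3) ⊆ X ^ (3 * j + 2) := by
  by_contra! hgrow
  have hchain : ∀ j, ∃ g : G, g ∈ X ^ (3 * j) ∧ (j ≠ 0 → j ≤ r → g ∉ X ^ (3 * j - 1)) := by
    rintro (_ | j)
    · exact ⟨1, Set.one_mem_pow h1, fun h => (h rfl).elim⟩
    by_cases hj : j < r
    · obtain ⟨g, hg, hg'⟩ := Set.not_subset.1 (hgrow j hj)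
      exact ⟨g, by simpa [mul_add] using hg, fun _ _ => by simpa [mul_add] using hg'⟩
    · exact ⟨1, Set.one_mem_pow h1, fun _ _ => by omega⟩
  choose g hg_mem hg_notMem using hchain
  have hdisj : (↑(Finset.range (r + 1)) : Set ℕ).PairwiseDisjoint fun j => g j • X := by
    have hlt : ∀ i j, i < j → j ≤ r → Disjoint (g i • X) (g j • X) := fun i j hij hjr =>
      Set.disjoint_smul_set_of_notMem_pow_add_two hsym (hg_mem i) fun h =>
        hg_notMem j (by omega) hjr (Set.pow_subset_pow_right h1 (by omega) h)
    intro i hi j hj hij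
    simp only [Finset.coe_range, Set.mem_Iio] at hi hj
    rcases hij.lt_or_gt with h | h
    · exact hlt i j h (by omega)
    · exact (hlt j i h (by omega)).symm
  have hle := Finset.card_mul_measure_le_of_pairwiseDisjoint_smul μ hX hdisj
  rw [Finset.card_range, measure_univ, mul_comm, ← ENNReal.le_inv_iff_mul_le] at hle
  exact hμ.not_ge (by simpa using hle)

theorem stmt2_general {G : Type*} [Group G] [TopologicalSpace G] [IsTopologicalGroup G]
    [CompactSpace G] [MeasurableSpace G] [BorelSpace G]
    (μ : Measure G) [μ.IsHaarMeasure] [IsProbabilityMeasure μ]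
    (r : ℕ) (X : Set G) (hX : IsClosed X) (hsym : X⁻¹ = X)
    (h1 : (1 : G) ∈ X) (hμ : ((r : ℝ≥0∞) + 1)⁻¹ < μ X) :
    ((Subgroup.closure X).topologicalClosure : Set G) = X ^ (3 * r) := by
  obtain ⟨j, hjr, hstab⟩ :=
    exists_pow_succ_subset_of_inv_lt_measure μ hX.measurableSet h1 hsym r hμ
  have hclosed : IsClosed (X ^ (3 * j + 2)) := hX.pow_succ_of_isCompact hX.isCompact _
  rw [Subgroup.topologicalClosure_coe,
    Subgroup.coe_closure_eq_pow_of_pow_succ_subset h1 hsym hstab, hclosed.closure_eq,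
    ← Set.pow_eq_of_pow_succ_subset (m := 3 * r) h1 hstab (by omega)]

theorem stmt2 {G : Type*} [Group G] [TopologicalSpace G] [IsTopologicalGroup G]
    [CompactSpace G] [T2Space G] [MeasurableSpace G] [BorelSpace G]
    (μ : Measure G) [μ.IsHaarMeasure] [IsProbabilityMeasure μ]
    (r : ℕ) (hr : 1 ≤ r) (X : Set G) (hX : IsClosed X) (hsym : X⁻¹ = X)
    (h1 : (1 : G) ∈ X) (hμ : ((r : ℝ≥0∞) + 1)⁻¹ < μ X) :
    ((Subgroup.closure X).topologicalClosure : Set G) = X ^ (3 * r) :=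
  stmt2_general μ r X hX hsym h1 hμ
end

section
/- Let G be a compact Hausdorff topological group and n a positive integer. Then the set X = {x ∈ G : the conjugacy class of x in G has at most n elements} is a closed subset of G. -/
/-!
A set has at most `n` elements iff among any `n + 1` of its points two coincide. So the class of
`x` has at most `n` elements iff for every `g : Fin (n + 1) → G` two of the conjugates
`(g i)⁻¹ * x * g i` are equal; for fixed `g` this is a finite union of equalizers of continuous
maps into a Hausdorff space, hence closed, and the set in question is the intersection over `g`.
-/

open Set Function

theorem Set.natCast_le_encard_range_iff {α ι : Type*} (f : ι → α) (k : ℕ) :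
    (k : ℕ∞) ≤ (range f).encard ↔ ∃ g : Fin k → ι, Injective (f ∘ g) := by
  constructor
  · intro h
    obtain ⟨e, -⟩ := Fin.Embedding.exists_embedding_disjoint_range_of_add_le_ENat_card
      (s := (∅ : Set (range f))) (n := k) (by simpa using h)
    choose g hg using fun i ↦ (e i).2
    refine ⟨g, fun i j hij ↦ e.injective (Subtype.ext ?_)⟩
    simpa [hg] using hij
  · rintro ⟨g, hg⟩
    calc (k : ℕ∞) = ENat.card (Fin k) := by simp
      _ ≤ (range (f ∘ g)).encard := hg.encard_range
      _ ≤ (range f).encard := encard_le_encard (range_comp_subset_range g f)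

theorem Set.encard_range_le_iff {α ι : Type*} (f : ι → α) (n : ℕ) :
    (range f).encard ≤ n ↔ ∀ g : Fin (n + 1) → ι, ¬ Injective (f ∘ g) := by
  rw [← not_exists, ← natCast_le_encard_range_iff, not_le, Nat.cast_add_one,
    ENat.lt_add_one_iff (ENat.natCast_ne_top n)]

theorem isClosed_setOf_not_injective {X Y ι : Type*} [TopologicalSpace X] [TopologicalSpace Y]
    [T2Space Y] [Finite ι] {f : ι → X → Y} (hf : ∀ i, Continuous (f i)) :
    IsClosed {x | ¬ Injective (fun i ↦ f i x)} := by
  have hunion : {x | ¬ Injective (fun i ↦ f i x)} =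
      ⋃ (i) (j) (_ : i ≠ j), {x | f i x = f j x} := by
    ext x
    simp [Injective, and_comm]
  rw [hunion]
  exact isClosed_iUnion_of_finite fun i ↦ isClosed_iUnion_of_finite fun j ↦
    isClosed_iUnion_of_finite fun _ ↦ isClosed_eq (hf i) (hf j)

theorem isClosed_setOf_encard_range_le {X Y ι : Type*} [TopologicalSpace X]
    [TopologicalSpace Y] [T2Space Y] {f : ι → X → Y} (hf : ∀ i, Continuous (f i)) (n : ℕ) :
    IsClosed {x | (range fun i ↦ f i x).encard ≤ n} := by
  simp_rw [encard_range_le_iff, ofPred_forall]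
  exact isClosed_iInter fun g ↦ isClosed_setOf_not_injective fun i ↦ hf (g i)

theorem stmt3_general {G : Type*} [Group G] [TopologicalSpace G] [IsTopologicalGroup G]
    [T2Space G] (n : ℕ) :
    IsClosed {x : G | {y : G | ∃ g : G, g⁻¹ * x * g = y}.Finite ∧
      {y : G | ∃ g : G, g⁻¹ * x * g = y}.ncard ≤ n} := by
  simp_rw [← encard_le_coe_iff_finite_ncard_le]
  exact isClosed_setOf_encard_range_le (fun g ↦ by fun_prop) n

theorem stmt3 {G : Type*} [Group G] [TopologicalSpace G] [IsTopologicalGroup G]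
    [CompactSpace G] [T2Space G] (n : ℕ) (hn : 0 < n) :
    IsClosed {x : G | {y : G | ∃ g : G, g⁻¹ * x * g = y}.Finite ∧
      {y : G | ∃ g : G, g⁻¹ * x * g = y}.ncard ≤ n} :=
  stmt3_general n
end

section
/- Let H and K be closed subgroups of a compact group G with H ≤ K. Then Pr(K,G) ≤ Pr(H,G) ≤ Pr(H,K). In particular, Pr(G,G) ≤ Pr(K,G) ≤ Pr(K,K). -/
open MeasureTheory
open scoped ENNReal

/-- The commuting probability `Pr(K, G)`: the measure, with respect to the
product of the given (normalized Haar) measures on `K` and `G`, of the set of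
commuting pairs in `K × G`. -/
noncomputable def haarCommProb {G : Type*} [Group G] [MeasurableSpace G]
    (K : Subgroup G) (ν : Measure K) (μ : Measure G) : ℝ≥0∞ :=
  (ν.prod μ) {p : K × G | (p.1 : G) * p.2 = p.2 * (p.1 : G)}

/-!
A closed subgroup `L` of a compact group is either null or, by Steinhaus, open, and then
`μ L = 1 / [G : L]`; as the index can only drop under pullback along a continuous homomorphism
`φ`, `μ L ≤ ν (φ ⁻¹' L)`. Applied to centralizers this compares, slice by slice, the sets of
commuting pairs in `K × G`, `H × G` and `H × K`.

These sets need not be measurable for the product σ-algebra, so their product measure is an outer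
measure, and slices have to be integrated with care. For any set the integral of the slice
measures is at most its product measure. For a closed set the slice measure is upper
semicontinuous; a lower semicontinuous majorant of it (Vitali–Carathéodory) and compactness
produce a product-measurable superset whose product measure exceeds the integral of the slice
measures by at most `ε`.
-/

section Slices

variable {X Y : Type*} [TopologicalSpace X] [TopologicalSpace Y]

theorem IsClosed.isOpen_setOf_preimage_mk_subset [CompactSpace Y] {s : Set (X × Y)}
    (hs : IsClosed s) {O : Set Y} (hO : IsOpen O) :
    IsOpen {x | Prod.mk x ⁻¹' s ⊆ O} := by
  have : {x | Prod.mk x ⁻¹' s ⊆ O}ᶜ = Prod.fst '' (s ∩ Prod.snd ⁻¹' Oᶜ) := by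
    ext x
    simp [Set.subset_def]
  rw [← isClosed_compl_iff, this]
  exact isClosedMap_fst_of_compactSpace _ (hs.inter (hO.isClosed_compl.preimage continuous_snd))

variable [MeasurableSpace Y] [CompactSpace Y]

theorem IsClosed.upperSemicontinuous_measure_preimage_mk (ν : Measure Y) [ν.OuterRegular]
    {s : Set (X × Y)} (hs : IsClosed s) :
    UpperSemicontinuous fun x => ν (Prod.mk x ⁻¹' s) := by
  intro x c hc
  obtain ⟨O, hsO, hO, hOc⟩ := Set.exists_isOpen_lt_of_lt _ c hc
  filter_upwards [(hs.isOpen_setOf_preimage_mk_subset hO).mem_nhds hsO] with x' hx'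
  exact (measure_mono hx').trans_lt hOc

end Slices

theorem lintegral_measure_preimage_mk_le_prod {X Y : Type*} [MeasurableSpace X]
    [MeasurableSpace Y] (μ : Measure X) (ν : Measure Y) [SFinite ν] (s : Set (X × Y)) :
    ∫⁻ x, ν (Prod.mk x ⁻¹' s) ∂μ ≤ μ.prod ν s := by
  set t := toMeasurable (μ.prod ν) s
  calc ∫⁻ x, ν (Prod.mk x ⁻¹' s) ∂μ ≤ ∫⁻ x, ν (Prod.mk x ⁻¹' t) ∂μ :=
        lintegral_mono fun x => measure_mono (Set.preimage_mono (subset_toMeasurable _ _))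
    _ = μ.prod ν s := by
        rw [← Measure.prod_apply (measurableSet_toMeasurable _ _), measure_toMeasurable]

theorem IsClosed.measure_prod_le_lintegral {X Y : Type*} [TopologicalSpace X] [MeasurableSpace X]
    [BorelSpace X] [CompactSpace X] [TopologicalSpace Y] [MeasurableSpace Y]
    [OpensMeasurableSpace Y] [CompactSpace Y] (μ : Measure X) [μ.WeaklyRegular]
    [IsFiniteMeasure μ] (ν : Measure Y) [ν.OuterRegular] [IsFiniteMeasure ν]
    {s : Set (X × Y)} (hs : IsClosed s) :
    μ.prod ν s ≤ ∫⁻ x, ν (Prod.mk x ⁻¹' s) ∂μ := by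
  have hf : Measurable fun x => ν (Prod.mk x ⁻¹' s) :=
    (hs.upperSemicontinuous_measure_preimage_mk ν).measurable
  refine ENNReal.le_of_forall_pos_le_add fun ε hε _ => ?_
  obtain ⟨g, hfg, hg, hgf⟩ := exists_lt_lowerSemicontinuous_lintegral_ge μ _
    hf.ennreal_toNNReal (ε := ε) (by positivity)
  simp only [ENNReal.coe_toNNReal (measure_ne_top _ _)] at hfg hgf
  choose O hsO hO hOg using fun x => Set.exists_isOpen_lt_of_lt _ _ (hfg x)
  set W := fun x => {x' | Prod.mk x' ⁻¹' s ⊆ O x} ∩ {x' | ν (O x) < g x'}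
  have hW : ∀ x, IsOpen (W x) := fun x =>
    (hs.isOpen_setOf_preimage_mk_subset (hO x)).inter (hg.isOpen_preimage _)
  obtain ⟨t, ht⟩ := CompactSpace.elim_nhds_subcover W fun x => (hW x).mem_nhds ⟨hsO x, hOg x⟩
  -- a product-measurable superset of `s` whose slice over any `x` lies in `O y` with `x ∈ W y`
  set T := ⋂ x ∈ t, {p : X × Y | p.1 ∈ W x → p.2 ∈ O x}
  have hT : MeasurableSet T := Finset.measurableSet_biInter t fun x _ =>
    ((hW x).measurableSet.preimage measurable_fst).himp
      ((hO x).measurableSet.preimage measurable_snd)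
  have hTg (x : X) : ν (Prod.mk x ⁻¹' T) ≤ g x := by
    obtain ⟨y, hy, hxy⟩ := Set.mem_iUnion₂.1 (ht.ge (Set.mem_univ x))
    calc ν (Prod.mk x ⁻¹' T) ≤ ν (O y) := measure_mono fun b hb => Set.mem_iInter₂.1 hb y hy hxy
      _ ≤ g x := hxy.2.le
  calc μ.prod ν s ≤ μ.prod ν T := measure_mono fun p hp => Set.mem_iInter₂.2 fun x _ hpx => hpx.1 hp
    _ = ∫⁻ x, ν (Prod.mk x ⁻¹' T) ∂μ := Measure.prod_apply hT
    _ ≤ ∫⁻ x, g x ∂μ := lintegral_mono hTg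
    _ ≤ _ := hgf

theorem IsClosed.measure_prod_le_of_measure_preimage_mk_le {P A B : Type*} [TopologicalSpace P]
    [MeasurableSpace P] [BorelSpace P] [CompactSpace P] [TopologicalSpace A] [MeasurableSpace A]
    [OpensMeasurableSpace A] [CompactSpace A] [MeasurableSpace B]
    (π : Measure P) [π.WeaklyRegular] [IsFiniteMeasure π]
    (α : Measure A) [α.OuterRegular] [IsFiniteMeasure α] (β : Measure B) [SFinite β]
    {s : Set (P × A)} (hs : IsClosed s) {t : Set (P × B)}
    (hst : ∀ p, α (Prod.mk p ⁻¹' s) ≤ β (Prod.mk p ⁻¹' t)) :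
    π.prod α s ≤ π.prod β t :=
  calc π.prod α s ≤ ∫⁻ p, α (Prod.mk p ⁻¹' s) ∂π := hs.measure_prod_le_lintegral π α
    _ ≤ ∫⁻ p, β (Prod.mk p ⁻¹' t) ∂π := lintegral_mono hst
    _ ≤ π.prod β t := lintegral_measure_preimage_mk_le_prod π β t

theorem Subgroup.index_comap_le {G G' : Type*} [Group G] [Group G'] (L : Subgroup G)
    [L.FiniteIndex] (φ : G' →* G) : (L.comap φ).index ≤ L.index := by
  rw [L.index_comap, ← L.relIndex_top_right]
  exact L.relIndex_le_of_le_right le_top (L.relIndex_top_right ▸ FiniteIndex.index_ne_zero)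

section CompactGroup

variable {G : Type*} [Group G] [TopologicalSpace G] [IsTopologicalGroup G] [CompactSpace G]
  [MeasurableSpace G] [BorelSpace G]

theorem Subgroup.measure_eq_inv_index_of_isOpen (μ : Measure G) [μ.IsMulLeftInvariant]
    [IsProbabilityMeasure μ] {L : Subgroup G} (hL : IsOpen (L : Set G)) :
    μ L = (L.index : ℝ≥0∞)⁻¹ := by
  have := L.quotient_finite_of_isOpen hL
  have := L.finiteIndex_of_finite_quotient
  refine ENNReal.eq_inv_of_mul_eq_one_left ?_
  rw [mul_comm, L.index_mul_measure hL.measurableSet, measure_univ]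

theorem Subgroup.isOpen_of_isClosed_of_measure_ne_zero (μ : Measure G)
    [μ.IsHaarMeasure] {L : Subgroup G} (hL : IsClosed (L : Set G)) (h : μ L ≠ 0) :
    IsOpen (L : Set G) :=
  L.isOpen_of_mem_nhds (g := 1) <| by
    simpa using μ.div_mem_nhds_one_of_haar_pos _ hL.measurableSet (pos_iff_ne_zero.2 h)

theorem Subgroup.measure_le_measure_preimage {K : Type*} [Group K]
    [TopologicalSpace K] [IsTopologicalGroup K] [CompactSpace K] [MeasurableSpace K]
    [BorelSpace K] (μ : Measure G) [μ.IsHaarMeasure] [IsProbabilityMeasure μ] (ν : Measure K)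
    [ν.IsMulLeftInvariant] [IsProbabilityMeasure ν] {φ : K →* G} (hφ : Continuous φ)
    {L : Subgroup G} (hL : IsClosed (L : Set G)) : μ L ≤ ν (φ ⁻¹' L) := by
  rcases eq_or_ne (μ L) 0 with h | h
  · simp [h]
  have hLo := L.isOpen_of_isClosed_of_measure_ne_zero μ hL h
  have := L.quotient_finite_of_isOpen hLo
  have := L.finiteIndex_of_finite_quotient
  rw [L.measure_eq_inv_index_of_isOpen μ hLo, ← L.coe_comap φ,
    (L.comap φ).measure_eq_inv_index_of_isOpen ν (hLo.preimage hφ)]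
  exact ENNReal.inv_le_inv.2 (mod_cast L.index_comap_le φ)

theorem measure_setOf_mul_comm_le {K M : Type*} [Group K] [TopologicalSpace K]
    [IsTopologicalGroup K] [CompactSpace K] [MeasurableSpace K] [BorelSpace K] [Group M]
    [TopologicalSpace M] [ContinuousMul M] [T2Space M] (μ : Measure G) [μ.IsHaarMeasure]
    [IsProbabilityMeasure μ] (ν : Measure K) [ν.IsMulLeftInvariant] [IsProbabilityMeasure ν]
    {χ : G →* M} (hχ : Continuous χ) {φ : K →* G} (hφ : Continuous φ) (y : M) :
    μ {x | χ x * y = y * χ x} ≤ ν {x | χ (φ x) * y = y * χ (φ x)} := by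
  have hC : χ ⁻¹' (Subgroup.centralizer {y} : Set M) = {x | χ x * y = y * χ x} :=
    Set.ext fun _ => Subgroup.mem_centralizer_singleton_iff
  have key := ((Subgroup.centralizer {y}).comap χ).measure_le_measure_preimage μ ν hφ
    ((Set.isClosed_centralizer _).preimage hχ)
  rw [Subgroup.coe_comap, hC] at key
  exact key

end CompactGroup

theorem ContinuousMulEquiv.measurePreserving_of_isProbabilityMeasure {G G' : Type*} [Group G]
    [TopologicalSpace G] [IsTopologicalGroup G] [MeasurableSpace G] [BorelSpace G] [Group G']
    [TopologicalSpace G'] [IsTopologicalGroup G'] [LocallyCompactSpace G'] [MeasurableSpace G']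
    [BorelSpace G'] (e : G ≃ₜ* G') (μ : Measure G) [μ.IsHaarMeasure]
    [IsProbabilityMeasure μ] (μ' : Measure G') [μ'.IsHaarMeasure] [IsProbabilityMeasure μ'] :
    MeasurePreserving e μ μ' := by
  have := Measure.isProbabilityMeasure_map (μ := μ) e.continuous.measurable.aemeasurable
  exact ⟨e.continuous.measurable, Measure.isHaarMeasure_eq_of_isProbabilityMeasure _ _⟩

theorem stmt5 {G : Type*} [Group G] [TopologicalSpace G] [IsTopologicalGroup G]
    [CompactSpace G] [T2Space G] [MeasurableSpace G] [BorelSpace G]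
    (μ : Measure G) [μ.IsHaarMeasure] [IsProbabilityMeasure μ]
    (H K : Subgroup G) (hHK : H ≤ K)
    (hHc : IsClosed (H : Set G)) (hKc : IsClosed (K : Set G))
    (ν : Measure K) [ν.IsHaarMeasure] [IsProbabilityMeasure ν]
    (lam : Measure H) [lam.IsHaarMeasure] [IsProbabilityMeasure lam]
    (lam' : Measure (H.subgroupOf K)) [lam'.IsHaarMeasure]
    [IsProbabilityMeasure lam'] :
    haarCommProb K ν μ ≤ haarCommProb H lam μ ∧
      haarCommProb H lam μ ≤ haarCommProb (H.subgroupOf K) lam' ν := by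
  have hHKc : IsClosed ((H.subgroupOf K : Subgroup K) : Set K) :=
    hHc.preimage continuous_subtype_val
  have := isCompact_iff_compactSpace.mp hKc.isCompact
  have := isCompact_iff_compactSpace.mp hHc.isCompact
  have := isCompact_iff_compactSpace.mp hHKc.isCompact
  have hS (L : Subgroup G) : IsClosed {p : L × G | (p.1 : G) * p.2 = p.2 * p.1} :=
    isClosed_eq (by fun_prop) (by fun_prop)
  constructor
  · rw [haarCommProb, haarCommProb,
      ← (Measure.measurePreserving_swap (μ := μ) (ν := ν)).measure_preimage_equiv (f := .prodComm),
      ← (Measure.measurePreserving_swap (μ := μ) (ν := lam)).measure_preimage_equiv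
        (f := .prodComm)]
    refine IsClosed.measure_prod_le_of_measure_preimage_mk_le μ ν lam ?_ fun y => ?_
    · exact (hS K).preimage continuous_swap
    · exact measure_setOf_mul_comm_le ν lam (χ := K.subtype) continuous_subtype_val
        (φ := Subgroup.inclusion hHK) (continuous_inclusion hHK) y
  · set i := Subgroup.subgroupOfContinuousMulEquivOfLe hHK
    set e := i.toHomeomorph.toMeasurableEquiv.prodCongr (MeasurableEquiv.refl K)
    have he : MeasurePreserving e (lam'.prod ν) (lam.prod ν) :=
      (i.measurePreserving_of_isProbabilityMeasure lam' lam).prod (MeasurePreserving.id ν)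
    rw [haarCommProb, haarCommProb, ← (he.symm e).measure_preimage_equiv]
    refine IsClosed.measure_prod_le_of_measure_preimage_mk_le lam μ ν (hS H) fun h => ?_
    convert measure_setOf_mul_comm_le μ ν (χ := .id G) continuous_id (φ := K.subtype)
      continuous_subtype_val (h : G) using 2
    · exact Set.ext fun _ => eq_comm
    · exact Set.ext fun _ => Subtype.ext_iff.trans eq_comm
end

section
/- Let m ≥ 1 and let G be a group containing a normal subgroup A and a subgroup B such that [A : C_A(y)] ≤ m and [B : C_B(x)] ≤ m for all x ∈ A and y ∈ B. If the normal closure ⟨B^G⟩ of B in G is abelian, then the subgroup [A,B] is finite of m-bounded order (i.e., there is a function f such that |[A,B]| ≤ f(m)). -/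
/-!
Neumann's argument. As `⟨B^G⟩` is abelian, each `b ↦ ⁅a, b⁆` with `a ∈ A` is a homomorphism
`B → ⟨B^G⟩` with kernel `C_B(a)`, so its image has order at most `m`; and each row
`{⁅a, b⁆ | a ∈ A}` has at most `m` elements. Pick `b₀` whose row is largest, realised by
`a₁, …, a_k`, and put `D = ⋂ C_B(aᵢ)`, of index at most `m^m`. For `d ∈ D` the row of `b₀ d`
contains that of `b₀`, hence equals it, so `⁅a, d⁆ = ⁅a, b₀⁆⁻¹ ⁅a, b₀ d⁆` lies in the subgroup
generated by the row of `b₀`. Hence `[A, B]` lies in the abelian group generated by the rows of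
`b₀` and of a transversal of `D`: at most `m^m + 1` rows of at most `m` elements of order at
most `m`.
-/

open Subgroup
open scoped IsMulCommutative commutatorElement

section CommGroup

variable {C : Type*} [CommGroup C]

theorem Subgroup.finite_iSup_and_card_iSup_le_prod {ι : Type*} [Fintype ι] (H : ι → Subgroup C)
    [∀ i, Finite (H i)] :
    Finite ↥(⨆ i, H i) ∧ Nat.card ↥(⨆ i, H i) ≤ ∏ i, Nat.card (H i) := by
  have hcomm : Pairwise fun i j => ∀ x y : C, x ∈ H i → y ∈ H j → Commute x y :=
    fun _ _ _ x y _ _ => Commute.all x y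
  rw [← noncommPiCoprod_range (hcomm := hcomm), ← Nat.card_pi]
  have hsurj := (noncommPiCoprod hcomm).rangeRestrict_surjective
  exact ⟨Finite.of_surjective _ hsurj, Nat.card_le_card_of_surjective _ hsurj⟩

theorem Subgroup.finite_closure_and_card_closure_le_pow {X : Set C} (hX : X.Finite) {m : ℕ}
    (hord : ∀ x ∈ X, IsOfFinOrder x ∧ orderOf x ≤ m) :
    Finite (closure X) ∧ Nat.card (closure X) ≤ m ^ X.ncard := by
  have := hX.fintype
  have (x : X) : Finite (zpowers (x : C)) :=
    Nat.finite_of_card_ne_zero ((Nat.card_zpowers _).trans_ne (hord x x.2).1.orderOf_pos.ne')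
  have hX' : closure X = ⨆ x : X, zpowers (x : C) := by
    simp_rw [zpowers_eq_closure, ← closure_iUnion, Set.iUnion_of_singleton_coe]
  rw [hX']
  obtain ⟨hfin, hcard⟩ := finite_iSup_and_card_iSup_le_prod fun x : X => zpowers (x : C)
  refine ⟨hfin, hcard.trans ?_⟩
  rw [← Nat.card_coe_set_eq, Nat.card_eq_fintype_card, ← Finset.card_univ]
  simpa only [Nat.card_zpowers] using
    Finset.prod_le_pow_card Finset.univ (fun x : X => orderOf (x : C)) m fun x _ => (hord x x.2).2

end CommGroup

theorem Nat.pow_le_pow_self_of_le {k m : ℕ} (h : k ≤ m) : m ^ k ≤ m ^ m := by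
  rcases Nat.eq_zero_or_pos m with rfl | hm
  · rw [Nat.le_zero.1 h]
  · exact Nat.pow_le_pow_right hm h

theorem MonoidHom.isOfFinOrder_apply_and_orderOf_le {B C : Type*} [Group B] [Group C]
    (g : B →* C) (hg : g.ker.index ≠ 0) (b : B) :
    IsOfFinOrder (g b) ∧ orderOf (g b) ≤ g.ker.index := by
  rw [index_ker] at hg ⊢
  have : Finite g.range := Nat.finite_of_card_ne_zero hg
  refine ⟨?_, g.range.orderOf_le_card (Set.toFinite _) ⟨b, rfl⟩⟩
  exact g.range.subtype.isOfFinOrder (isOfFinOrder_of_finite (g.rangeRestrict b))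

section Pairing

variable {α B C : Type*} [Group B] [CommGroup C] (f : α → B →* C) {m : ℕ}

theorem exists_index_le_and_apply_mem_closure_range
    (hker : ∀ a, (f a).ker.index ≠ 0 ∧ (f a).ker.index ≤ m)
    (hrow : ∀ b, (Set.range (f · b)).Finite ∧ (Set.range (f · b)).ncard ≤ m) :
    ∃ b₀ : B, ∃ D : Subgroup B, D.index ≠ 0 ∧ D.index ≤ m ^ m ∧
      ∀ d ∈ D, ∀ a, f a d ∈ closure (Set.range (f · b₀)) := by
  have hsizes : (Set.range fun b => (Set.range (f · b)).ncard).Finite :=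
    (Set.finite_Iic m).subset (Set.range_subset_iff.2 fun b => (hrow b).2)
  obtain ⟨_, ⟨b₀, rfl⟩, hmax⟩ := Set.exists_max_image _ id hsizes ⟨_, 1, rfl⟩
  set R := Set.range (f · b₀)
  have := (hrow b₀).1.fintype
  choose w hw using fun c : R => (c.2 : ∃ a, f a b₀ = c)
  refine ⟨b₀, ⨅ c : R, (f (w c)).ker, index_iInf_ne_zero fun c => (hker _).1, ?_, ?_⟩
  · have hR : Fintype.card R ≤ m := by
      rw [← Nat.card_eq_fintype_card, Nat.card_coe_set_eq]; exact (hrow b₀).2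
    calc (⨅ c : R, (f (w c)).ker).index ≤ ∏ c : R, (f (w c)).ker.index := index_iInf_le _
      _ ≤ m ^ Fintype.card R := Finset.prod_le_pow_card _ _ _ fun c _ => (hker _).2
      _ ≤ m ^ m := Nat.pow_le_pow_self_of_le hR
  · intro d hd a
    -- `d` kills the witnesses of the maximal row, so the row of `b₀ * d` contains it, hence is it
    have hsub : R ⊆ Set.range (f · (b₀ * d)) := fun c hc => ⟨w ⟨c, hc⟩, by
      change f _ (b₀ * d) = c
      rw [map_mul, (mem_iInf.1 hd ⟨c, hc⟩ : _ = _), mul_one]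
      exact hw ⟨c, hc⟩⟩
    have hrow' : Set.range (f · (b₀ * d)) = R :=
      (Set.eq_of_subset_of_ncard_le hsub (hmax _ ⟨_, rfl⟩) (hrow _).1).symm
    have hmem : f a (b₀ * d) ∈ R := hrow' ▸ ⟨a, rfl⟩
    have hfd : f a d = (f a b₀)⁻¹ * f a (b₀ * d) := by rw [map_mul, inv_mul_cancel_left]
    rw [hfd]
    exact mul_mem (inv_mem (subset_closure ⟨a, rfl⟩)) (subset_closure hmem)

theorem finite_and_card_iSup_range_le
    (hker : ∀ a, (f a).ker.index ≠ 0 ∧ (f a).ker.index ≤ m)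
    (hrow : ∀ b, (Set.range (f · b)).Finite ∧ (Set.range (f · b)).ncard ≤ m) :
    Finite ↥(⨆ a, (f a).range) ∧ Nat.card ↥(⨆ a, (f a).range) ≤ (m ^ m) ^ (m ^ m + 1) := by
  obtain ⟨b₀, D, hD0, hDm, hD⟩ := exists_index_le_and_apply_mem_closure_range f hker hrow
  have : Finite (B ⧸ D) := Nat.finite_of_card_ne_zero hD0
  have := Fintype.ofFinite (B ⧸ D)
  let K (b : B) : Subgroup C := closure (Set.range (f · b))
  have hK (b : B) : Finite (K b) ∧ Nat.card (K b) ≤ m ^ m := by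
    obtain ⟨hfin, hcard⟩ := finite_closure_and_card_closure_le_pow (m := m) (hrow b).1 <| by
      rintro _ ⟨a, rfl⟩
      exact (MonoidHom.isOfFinOrder_apply_and_orderOf_le _ (hker a).1 b).imp_right
        (·.trans (hker a).2)
    exact ⟨hfin, hcard.trans (Nat.pow_le_pow_self_of_le (hrow b).2)⟩
  -- `K b₀` absorbs the values on `D`, the other factors the values on a transversal of `D`
  let t (i : Option (B ⧸ D)) : B := i.elim b₀ Quotient.out
  have := fun i => (hK (t i)).1
  obtain ⟨hfin, hcard⟩ := finite_iSup_and_card_iSup_le_prod fun i => K (t i)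
  have hle : ⨆ a, (f a).range ≤ ⨆ i, K (t i) := by
    refine iSup_le fun a => ?_
    rintro _ ⟨b, rfl⟩
    obtain ⟨d, hd⟩ := QuotientGroup.mk_out_eq_mul D b
    have hb : b = (QuotientGroup.mk b : B ⧸ D).out * d⁻¹ := by simp [hd]
    rw [hb, map_mul]
    exact mul_mem (mem_iSup_of_mem (some (QuotientGroup.mk b)) (subset_closure ⟨a, rfl⟩))
      (mem_iSup_of_mem none (hD _ (inv_mem d.2) a))
  refine ⟨Finite.of_injective _ (inclusion_injective hle),
    (card_le_of_le hle).trans (hcard.trans ?_)⟩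
  calc ∏ i, Nat.card (K (t i)) ≤ (m ^ m) ^ Fintype.card (Option (B ⧸ D)) :=
        Finset.prod_le_pow_card _ _ _ fun i _ => (hK (t i)).2
    _ = (m ^ m) ^ (D.index + 1) := by
        rw [Fintype.card_option, index_eq_card, Nat.card_eq_fintype_card]
    _ ≤ (m ^ m) ^ (m ^ m + 1) := Nat.pow_le_pow_right Nat.pow_self_pos (by omega)

end Pairing

section Commutator

variable {G : Type*} [Group G] {B : Subgroup G}

theorem commutatorElement_mem_normalClosure (a : G) {b : G} (hb : b ∈ B) :
    ⁅a, b⁆ ∈ normalClosure (B : Set G) :=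
  commutator_le_right _ _ (commutator_mem_commutator (mem_top a) (subset_normalClosure hb))

variable [IsMulCommutative (normalClosure (B : Set G))]

/-- `b ↦ ⁅a, b⁆` is multiplicative on `B` because its values commute with `B`. -/
def commutatorHom (a : G) : B →* normalClosure (B : Set G) where
  toFun b := ⟨⁅a, b⁆, commutatorElement_mem_normalClosure a b.2⟩
  map_one' := by ext; simp
  map_mul' b₁ b₂ := by
    ext
    change ⁅a, (b₁ : G) * b₂⁆ = ⁅a, (b₁ : G)⁆ * ⁅a, (b₂ : G)⁆
    have hcomm : (b₁ : G) * ⁅a, (b₂ : G)⁆ = ⁅a, (b₂ : G)⁆ * b₁ :=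
      congrArg Subtype.val (mul_comm (⟨b₁, subset_normalClosure b₁.2⟩ : normalClosure (B : Set G))
        ⟨_, commutatorElement_mem_normalClosure a b₂.2⟩)
    rw [commutatorElement_mul_right_eq_mul_conj, mul_assoc _ (b₁ : G), hcomm, ← mul_assoc,
      mul_inv_cancel_right]

@[simp]
theorem coe_commutatorHom_apply (a : G) (b : B) : (commutatorHom a b : G) = ⁅a, (b : G)⁆ := rfl

theorem ker_commutatorHom (a : G) :
    (commutatorHom (B := B) a).ker = (centralizer {a}).subgroupOf B := by
  ext b
  simp [mem_subgroupOf, mem_centralizer_singleton_iff, commutatorElement_eq_one_iff_mul_comm,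
    ← Subtype.val_inj, eq_comm]

theorem finite_and_ncard_range_commutatorHom_le (A : Subgroup G) (b : B)
    (hb : (centralizer {(b : G)}).relIndex A ≠ 0) :
    (Set.range fun a : A => commutatorHom (a : G) b).Finite ∧
      (Set.range fun a : A => commutatorHom (a : G) b).ncard ≤
        (centralizer {(b : G)}).relIndex A := by
  let K := (centralizer {(b : G)}).subgroupOf A
  have : Finite (A ⧸ K) := Nat.finite_of_card_ne_zero hb
  have hrange : (Set.range fun a : A => commutatorHom (a : G) b) =
      Set.range fun q : A ⧸ K => commutatorHom ((q.out : A) : G) b := by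
    refine subset_antisymm ?_ (Set.range_subset_iff.2 fun q => ⟨_, rfl⟩)
    rintro _ ⟨a, rfl⟩
    obtain ⟨c, hc⟩ := QuotientGroup.mk_out_eq_mul K a
    have hcb : (c : G) * b = b * c := mem_centralizer_singleton_iff.1 c.2
    refine ⟨QuotientGroup.mk a, Subtype.ext ?_⟩
    simp [hc, commutatorElement_mul_left_eq_conj_mul, commutatorElement_eq_one_iff_mul_comm.2 hcb]
  rw [hrange, ← Nat.card_coe_set_eq]
  exact ⟨Set.finite_range _, Finite.card_range_le _⟩

end Commutator

theorem stmt7 :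
    ∃ f : ℕ → ℕ, ∀ (m : ℕ), 1 ≤ m →
      ∀ (G : Type u) [Group G] (A B : Subgroup G), A.Normal →
        (∀ y ∈ B, (Subgroup.centralizer {y}).relIndex A ≠ 0 ∧
          (Subgroup.centralizer {y}).relIndex A ≤ m) →
        (∀ x ∈ A, (Subgroup.centralizer {x}).relIndex B ≠ 0 ∧
          (Subgroup.centralizer {x}).relIndex B ≤ m) →
        IsMulCommutative (Subgroup.normalClosure (B : Set G)) →
        Nat.card (⁅A, B⁆ : Subgroup G) ≠ 0 ∧ Nat.card (⁅A, B⁆ : Subgroup G) ≤ f m := by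
  refine ⟨fun m => (m ^ m) ^ (m ^ m + 1), fun m _ G _ A B _ hA hB _ => ?_⟩
  let f (a : A) : B →* normalClosure (B : Set G) := commutatorHom a
  obtain ⟨hfin, hcard⟩ := finite_and_card_iSup_range_le f
    (fun a => by rw [ker_commutatorHom]; exact hB a a.2)
    (fun b => (finite_and_ncard_range_commutatorHom_le A b (hA b b.2).1).imp_right
      (·.trans (hA b b.2).2))
  have hle : ⁅A, B⁆ ≤ (⨆ a, (f a).range).map (normalClosure (B : Set G)).subtype :=
    commutator_le.2 fun a ha b hb => ⟨_, mem_iSup_of_mem ⟨a, ha⟩ ⟨⟨b, hb⟩, rfl⟩, rfl⟩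
  have : Finite ↥((⨆ a, (f a).range).map (normalClosure (B : Set G)).subtype) :=
    Finite.of_injective _ (equivMapOfInjective _ _ (subtype_injective _)).symm.injective
  have : Finite ↥⁅A, B⁆ := Finite.of_injective _ (inclusion_injective hle)
  refine ⟨Nat.card_pos.ne', (card_le_of_le hle).trans ?_⟩
  rwa [card_map_of_injective (subtype_injective _)]
end

section
/- Let G be a group and X a subset of G closed under G-conjugation, and let H = ⟨X⟩. Suppose m is a positive integer such that [H : C_H(x)] ≤ m for every x ∈ X. Then for every x ∈ X, the subgroup [H,x] = ⟨[h,x] : h ∈ H⟩ has finite order bounded by a function of m only. -/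
/-!
Inside `H = ⟨X⟩` let `C` be the class of `x`, so `|C| ≤ m`. A group generated by `k` elements
with at most `n` conjugates each has centre of index at most `n ^ k`, hence at most `n ^ (2k)`
commutators, so by Schur's theorem its derived subgroup has order bounded in terms of `n` and `k`.
Applied to `⟨y^H ∪ C⟩` for `y ∈ X`, this makes `⁅y, c⁆` (`c ∈ C`) of order dividing a number
`E(m)`. The identities `⁅a * b, c⁆ = ⁅a, b * c * b⁻¹⁆ * ⁅b, c⁆` and `⁅a⁻¹, c⁆ = ⁅a, a⁻¹ * c * a⁆⁻¹`
spread this, modulo `A'`, to all `⁅h, c⁆` with `h ∈ H`, where `A = [H, x]`. Finally `A` is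
generated by the at most `m` elements `c * x⁻¹` (`c ∈ C`), each with at most `m ^ 2` conjugates:
so `A'` is bounded as before, and `A / A'` is abelian, generated by `m` elements of exponent
dividing `E(m)`.
-/

universe u

open scoped commutatorElement

open Subgroup
open scoped Nat

theorem Subgroup.cardCommutatorBound_mono : Monotone cardCommutatorBound := by
  intro a b hab
  rcases b.eq_zero_or_pos with rfl | hb
  · rw [Nat.le_zero.mp hab]
  have hpow (j : ℕ) : a ^ (2 * a + j) ≤ b ^ (2 * b + j) :=
    (Nat.pow_le_pow_left hab _).trans (Nat.pow_le_pow_right hb (by omega))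
  calc (a ^ (2 * a)) ^ (a ^ (2 * a + 1) + 1)
      ≤ (b ^ (2 * b)) ^ (a ^ (2 * a + 1) + 1) := Nat.pow_le_pow_left (by simpa using hpow 0) _
    _ ≤ (b ^ (2 * b)) ^ (b ^ (2 * b + 1) + 1) :=
        Nat.pow_le_pow_right (by positivity) (by simpa using hpow 1)

section

variable {G : Type*} [Group G]

theorem index_center_le_pow_of_closure_eq_top {S : Set G} [Finite S] (hS : closure S = ⊤) {n : ℕ}
    (hSn : ∀ s ∈ S, (centralizer {s}).index ≤ n) : (center G).index ≤ n ^ Nat.card S := by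
  have := Fintype.ofFinite S
  rw [center_eq_infi' hS, Nat.card_eq_fintype_card, ← Finset.card_univ, ← Finset.prod_const]
  exact (index_iInf_le _).trans (Finset.prod_le_prod' fun s _ ↦ hSn s s.2)

theorem index_center_ne_zero_of_closure_eq_top {S : Set G} [Finite S] (hS : closure S = ⊤)
    (hS₀ : ∀ s ∈ S, (centralizer {s}).index ≠ 0) : (center G).index ≠ 0 := by
  rw [center_eq_infi' hS]
  exact index_iInf_ne_zero fun s ↦ hS₀ s s.2

theorem commutatorElement_mul_mem_center (a b : G) {z w : G} (hz : z ∈ center G)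
    (hw : w ∈ center G) : ⁅a * z, b * w⁆ = ⁅a, b⁆ := by
  rw [mem_center_iff] at hz hw
  simp only [commutatorElement_def, mul_inv_rev]
  calc a * z * (b * w) * (z⁻¹ * a⁻¹) * (w⁻¹ * b⁻¹)
      = a * (z * (b * w)) * z⁻¹ * a⁻¹ * w⁻¹ * b⁻¹ := by group
    _ = a * b * (w * a⁻¹) * w⁻¹ * b⁻¹ := by rw [← hz (b * w)]; group
    _ = a * b * a⁻¹ * b⁻¹ := by rw [← hw a⁻¹]; group

theorem surjective_commutatorElement_out :
    Function.Surjective fun p : (G ⧸ center G) × (G ⧸ center G) ↦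
      (⟨⁅p.1.out, p.2.out⁆, p.1.out, p.2.out, rfl⟩ : commutatorSet G) := by
  rintro ⟨_, a, b, rfl⟩
  refine ⟨((a : G ⧸ center G), (b : G ⧸ center G)), Subtype.ext ?_⟩
  obtain ⟨z, hz⟩ := QuotientGroup.mk_out_eq_mul (center G) a
  obtain ⟨w, hw⟩ := QuotientGroup.mk_out_eq_mul (center G) b
  simp only [hz, hw]
  exact commutatorElement_mul_mem_center a b z.2 w.2

theorem finite_commutatorSet [(center G).FiniteIndex] : Finite (commutatorSet G) :=
  Finite.of_surjective _ surjective_commutatorElement_out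

theorem natCard_commutatorSet_le [(center G).FiniteIndex] :
    Nat.card (commutatorSet G) ≤ (center G).index ^ 2 :=
  (Nat.card_le_card_of_surjective _ surjective_commutatorElement_out).trans_eq <| by
    rw [Nat.card_prod, sq]; rfl

theorem card_commutator_le_of_closure_eq_top {S : Set G} [Finite S] (hS : closure S = ⊤)
    {n k : ℕ} (hn : 0 < n) (hk : Nat.card S ≤ k)
    (hS₀ : ∀ s ∈ S, (centralizer {s}).index ≠ 0) (hSn : ∀ s ∈ S, (centralizer {s}).index ≤ n) :
    Finite (commutator G) ∧ Nat.card (commutator G) ≤ cardCommutatorBound ((n ^ k) ^ 2) := by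
  have : (center G).FiniteIndex := ⟨index_center_ne_zero_of_closure_eq_top hS hS₀⟩
  have := finite_commutatorSet (G := G)
  refine ⟨inferInstance, (card_commutator_le_of_finite_commutatorSet G).trans
    (cardCommutatorBound_mono (natCard_commutatorSet_le.trans ?_))⟩
  gcongr
  exact (index_center_le_pow_of_closure_eq_top hS hSn).trans (Nat.pow_le_pow_right hn hk)

theorem CommGroup.card_le_pow_of_closure_eq_top {A : Type*} [CommGroup A] {S : Set A} [Finite S]
    (hS : closure S = ⊤) {E : ℕ} (hE : 0 < E) (hSE : ∀ s ∈ S, s ^ E = 1) :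
    Finite A ∧ Nat.card A ≤ E ^ Nat.card S := by
  have hA (a : A) : a ^ E = 1 := by
    have : closure S ≤ (powMonoidHom E : A →* A).ker := (closure_le _).mpr hSE
    exact this (hS ▸ mem_top a)
  have hSfin : S.Finite := Set.toFinite S
  have : Group.FG A := Group.fg_iff.mpr ⟨S, hS, hSfin⟩
  have hrank : Group.rank A ≤ Nat.card S := by
    rw [Nat.card_coe_set_eq, Set.ncard_eq_toFinset_card S hSfin]
    exact Group.rank_le (by rwa [Set.Finite.coe_toFinset])
  have hdvd := card_dvd_exponent_pow_rank' A hA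
  have hpos : 0 < E ^ Group.rank A := by positivity
  exact ⟨Nat.finite_of_card_ne_zero (ne_zero_of_dvd_ne_zero hpos.ne' hdvd),
    (Nat.le_of_dvd hpos hdvd).trans (Nat.pow_le_pow_right hE hrank)⟩

theorem card_le_of_closure_eq_top {S : Set G} [Finite S] (hS : closure S = ⊤)
    {n k E : ℕ} (hn : 0 < n) (hE : 0 < E) (hk : Nat.card S ≤ k)
    (hS₀ : ∀ s ∈ S, (centralizer {s}).index ≠ 0) (hSn : ∀ s ∈ S, (centralizer {s}).index ≤ n)
    (hSE : ∀ s ∈ S, Abelianization.of s ^ E = 1) :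
    Finite G ∧ Nat.card G ≤ E ^ k * cardCommutatorBound ((n ^ k) ^ 2) := by
  obtain ⟨_, hcomm⟩ := card_commutator_le_of_closure_eq_top hS hn hk hS₀ hSn
  have hS' : closure (Abelianization.of '' S) = ⊤ := by
    rw [← MonoidHom.map_closure, hS, map_top_of_surjective _ QuotientGroup.mk_surjective]
  obtain ⟨_, hab⟩ := CommGroup.card_le_pow_of_closure_eq_top hS' hE (by
    rintro _ ⟨s, hs, rfl⟩
    exact hSE s hs)
  have hcard : Nat.card G = Nat.card (Abelianization G) * Nat.card (commutator G) :=
    card_eq_card_quotient_mul_card_subgroup _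
  have hpos : Nat.card G ≠ 0 := by
    rw [hcard]
    exact (Nat.mul_pos Nat.card_pos Nat.card_pos).ne'
  refine ⟨Nat.finite_of_card_ne_zero hpos, hcard ▸ Nat.mul_le_mul ?_ hcomm⟩
  exact hab.trans (Nat.pow_le_pow_right hE ((Nat.card_image_le (Set.toFinite S)).trans hk))

theorem index_centralizer_eq_relIndex (H : Subgroup G) (h : H) :
    (centralizer {h}).index = (centralizer {(h : G)}).relIndex H := by
  congr 1
  ext u
  simp [mem_subgroupOf, mem_centralizer_singleton_iff, Subtype.ext_iff]

theorem index_centralizer_subtype_ne_zero {H : Subgroup G} {h : H}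
    (h₀ : (centralizer {(h : G)}).index ≠ 0) : (centralizer {h}).index ≠ 0 := by
  have : (centralizer {(h : G)}).FiniteIndex := ⟨h₀⟩
  rw [index_centralizer_eq_relIndex]
  exact FiniteIndex.index_ne_zero

theorem index_centralizer_subtype_le {H : Subgroup G} {h : H}
    (h₀ : (centralizer {(h : G)}).index ≠ 0) :
    (centralizer {h}).index ≤ (centralizer {(h : G)}).index := by
  rw [index_centralizer_eq_relIndex, ← relIndex_top_right]
  exact relIndex_le_of_le_right le_top (by rwa [relIndex_top_right])

theorem natCard_preimage_subtype_closure (D : Set G) :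
    Nat.card ((closure D).subtype ⁻¹' D) = Nat.card D :=
  Nat.card_preimage_of_injective Subtype.val_injective fun d hd ↦ ⟨⟨d, subset_closure hd⟩, rfl⟩

instance (D : Set G) [Finite D] : Finite ((closure D).subtype ⁻¹' D) :=
  ((Set.toFinite D).preimage Subtype.val_injective.injOn).to_subtype

theorem commutatorElement_pow_eq_one_of_mem_closure {D : Set G} [Finite D] {n k : ℕ}
    (hn : 0 < n) (hk : Nat.card D ≤ k) (hD₀ : ∀ d ∈ D, (centralizer {d}).index ≠ 0)
    (hDn : ∀ d ∈ D, (centralizer {d}).index ≤ n) {a b : G} (ha : a ∈ closure D)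
    (hb : b ∈ closure D) : ⁅a, b⁆ ^ (cardCommutatorBound ((n ^ k) ^ 2))! = 1 := by
  obtain ⟨_, hcard⟩ := card_commutator_le_of_closure_eq_top (closure_preimage_eq_top D) hn
    ((natCard_preimage_subtype_closure D).trans_le hk)
    (fun t ht ↦ index_centralizer_subtype_ne_zero (hD₀ t ht))
    (fun t ht ↦ (index_centralizer_subtype_le (hD₀ t ht)).trans (hDn t ht))
  have hmem : ⁅(⟨a, ha⟩ : closure D), ⟨b, hb⟩⁆ ∈ commutator (closure D) :=
    commutator_mem_commutator (mem_top _) (mem_top _)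
  have := orderOf_dvd_iff_pow_eq_one.mp
    ((orderOf_dvd_natCard _ hmem).trans (Nat.dvd_factorial Nat.card_pos hcard))
  simpa [commutatorElement_def] using congrArg Subtype.val this

theorem card_closure_le {D : Set G} [Finite D] {n k E : ℕ} (hn : 0 < n) (hE : 0 < E)
    (hk : Nat.card D ≤ k) (hD₀ : ∀ d ∈ D, (centralizer {d}).index ≠ 0)
    (hDn : ∀ d ∈ D, (centralizer {d}).index ≤ n)
    (hDE : ∀ d : closure D, (d : G) ∈ D → Abelianization.of d ^ E = 1) :
    Finite (closure D) ∧ Nat.card (closure D) ≤ E ^ k * cardCommutatorBound ((n ^ k) ^ 2) :=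
  card_le_of_closure_eq_top (closure_preimage_eq_top D) hn hE
    ((natCard_preimage_subtype_closure D).trans_le hk)
    (fun t ht ↦ index_centralizer_subtype_ne_zero (hD₀ t ht))
    (fun t ht ↦ (index_centralizer_subtype_le (hD₀ t ht)).trans (hDn t ht)) hDE

theorem index_centralizer_eq_ncard_conjugatesOf (g : G) :
    (centralizer {g}).index = (conjugatesOf g).ncard := by
  have e : MulAction.orbit (ConjAct G) g ≃ G ⧸ centralizer {g} :=
    (MulAction.orbitEquivQuotientStabilizer (ConjAct G) g).trans
      (quotientEquivOfEq (ConjAct.stabilizer_eq_centralizer g))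
  rw [index, ← Nat.card_congr e, Nat.card_coe_set_eq]
  congr 1
  ext h
  exact ConjAct.mem_orbit_conjAct.trans isConj_comm

theorem IsConj.index_centralizer_eq {g g' : G} (h : IsConj g g') :
    (centralizer {g}).index = (centralizer {g'}).index := by
  simp only [index_centralizer_eq_ncard_conjugatesOf, h.conjugatesOf_eq]

theorem finite_conjugatesOf {g : G} (hg : (centralizer {g}).index ≠ 0) :
    (conjugatesOf g).Finite :=
  Set.finite_of_ncard_ne_zero (index_centralizer_eq_ncard_conjugatesOf g ▸ hg)

theorem commutatorElement_mul_left_eq_commutatorElement_conj_mul (a b c : G) :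
    ⁅a * b, c⁆ = ⁅a, b * c * b⁻¹⁆ * ⁅b, c⁆ := by
  simp only [commutatorElement_def]; group

theorem commutatorElement_inv_left_eq_inv_commutatorElement_conj (a c : G) :
    ⁅a⁻¹, c⁆ = ⁅a, a⁻¹ * c * a⁆⁻¹ := by
  simp only [commutatorElement_def]; group

theorem commutatorElement_conj_right (a b c : G) :
    ⁅a, b * c * b⁻¹⁆ = ⁅a * b, c⁆ * ⁅b, c⁆⁻¹ := by
  simp only [commutatorElement_def]; group

theorem commutatorElement_mem_of_mem_closure {W : Subgroup G} {X C : Set G}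
    (hC : ∀ g, ∀ c ∈ C, g * c * g⁻¹ ∈ C) (hXC : ∀ y ∈ X, ∀ c ∈ C, ⁅y, c⁆ ∈ W)
    {h : G} (hh : h ∈ closure X) : ∀ c ∈ C, ⁅h, c⁆ ∈ W := by
  induction hh using closure_induction with
  | mem y hy => exact hXC y hy
  | one => simp [W.one_mem]
  | mul a b _ _ ha hb =>
    intro c hc
    rw [commutatorElement_mul_left_eq_commutatorElement_conj_mul]
    exact mul_mem (ha _ (hC b c hc)) (hb c hc)
  | inv a _ ha =>
    intro c hc
    rw [commutatorElement_inv_left_eq_inv_commutatorElement_conj]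
    exact inv_mem (ha _ (by simpa using hC a⁻¹ c hc))

theorem setOf_commutatorElement_eq_image (x : G) :
    {g | ∃ h : G, g = ⁅h, x⁆} = (· * x⁻¹) '' conjugatesOf x := by
  ext g
  simp only [Set.mem_ofPred_eq, Set.mem_image, conjugatesOf, isConj_iff, commutatorElement_def]
  constructor
  · rintro ⟨h, rfl⟩
    exact ⟨_, ⟨h, rfl⟩, rfl⟩
  · rintro ⟨_, ⟨h, rfl⟩, rfl⟩
    exact ⟨h, rfl⟩

theorem centralizer_inf_le_centralizer_commutatorElement (h x : G) :
    centralizer {x} ⊓ centralizer {h * x * h⁻¹} ≤ centralizer {⁅h, x⁆} := by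
  intro g hg
  obtain ⟨hx, hc⟩ := mem_inf.mp hg
  rw [mem_centralizer_singleton_iff] at hx hc
  rw [mem_centralizer_singleton_iff, commutatorElement_def]
  exact Commute.mul_right hc (Commute.inv_right hx)

theorem index_centralizer_commutatorElement_le (h : G) {x : G}
    (hx : (centralizer {x}).index ≠ 0) :
    (centralizer {⁅h, x⁆}).index ≠ 0 ∧
      (centralizer {⁅h, x⁆}).index ≤ (centralizer {x}).index ^ 2 := by
  have hconj : (centralizer {h * x * h⁻¹}).index = (centralizer {x}).index :=
    (isConj_iff.mpr ⟨h, rfl⟩).index_centralizer_eq.symm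
  have hinf := index_inf_ne_zero hx (hconj ▸ hx)
  have hdvd := index_dvd_of_le (centralizer_inf_le_centralizer_commutatorElement h x)
  refine ⟨ne_zero_of_dvd_ne_zero hinf hdvd, ?_⟩
  calc (centralizer {⁅h, x⁆}).index ≤ (centralizer {x} ⊓ centralizer {h * x * h⁻¹}).index :=
        Nat.le_of_dvd (Nat.pos_of_ne_zero hinf) hdvd
    _ ≤ (centralizer {x}).index * (centralizer {h * x * h⁻¹}).index := index_inf_le
    _ = (centralizer {x}).index ^ 2 := by rw [hconj, sq]

theorem commutatorElement_pow_eq_one_of_isConj {m : ℕ} {x y c : G}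
    (hx₀ : (centralizer {x}).index ≠ 0) (hxm : (centralizer {x}).index ≤ m)
    (hy₀ : (centralizer {y}).index ≠ 0) (hym : (centralizer {y}).index ≤ m) (hc : IsConj x c) :
    ⁅y, c⁆ ^ (cardCommutatorBound ((m ^ (2 * m)) ^ 2))! = 1 := by
  set D := conjugatesOf y ∪ conjugatesOf x
  have : Finite D := ((finite_conjugatesOf hy₀).union (finite_conjugatesOf hx₀)).to_subtype
  have hD : ∀ d ∈ D, (centralizer {d}).index ≠ 0 ∧ (centralizer {d}).index ≤ m := by
    rintro d (hd | hd)
    · rw [← hd.index_centralizer_eq]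
      exact ⟨hy₀, hym⟩
    · rw [← hd.index_centralizer_eq]
      exact ⟨hx₀, hxm⟩
  have hcard : Nat.card D ≤ 2 * m := by
    rw [Nat.card_coe_set_eq, two_mul]
    refine (Set.ncard_union_le _ _).trans (add_le_add ?_ ?_)
    · rwa [← index_centralizer_eq_ncard_conjugatesOf]
    · rwa [← index_centralizer_eq_ncard_conjugatesOf]
  exact commutatorElement_pow_eq_one_of_mem_closure ((Nat.pos_of_ne_zero hx₀).trans_le hxm) hcard
    (fun d hd ↦ (hD d hd).1) (fun d hd ↦ (hD d hd).2)
    (subset_closure (Or.inl mem_conjugatesOf_self)) (subset_closure (Or.inr hc))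

theorem abelianization_of_pow_eq_one_of_mem_setOf_commutatorElement {X : Set G}
    (hX : closure X = ⊤) {m : ℕ} (hX₀ : ∀ y ∈ X, (centralizer {y}).index ≠ 0)
    (hXm : ∀ y ∈ X, (centralizer {y}).index ≤ m) {x : G} (hx₀ : (centralizer {x}).index ≠ 0)
    (hxm : (centralizer {x}).index ≤ m) (a : closure {g | ∃ h : G, g = ⁅h, x⁆})
    (ha : (a : G) ∈ {g | ∃ h : G, g = ⁅h, x⁆}) :
    Abelianization.of a ^ (cardCommutatorBound ((m ^ (2 * m)) ^ 2))! = 1 := by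
  set A := closure {g | ∃ h : G, g = ⁅h, x⁆}
  set E := (cardCommutatorBound ((m ^ (2 * m)) ^ 2))!
  let W : Subgroup G :=
    ((powMonoidHom E).comp (Abelianization.of : A →* Abelianization A)).ker.map A.subtype
  have hmem (h : G) {c : G} (hc : IsConj x c) : ⁅h, c⁆ ∈ A := by
    obtain ⟨g, rfl⟩ := isConj_iff.mp hc
    rw [commutatorElement_conj_right]
    exact mul_mem (subset_closure ⟨h * g, rfl⟩) (inv_mem (subset_closure ⟨g, rfl⟩))
  have hW (h : G) : ∀ c ∈ conjugatesOf x, ⁅h, c⁆ ∈ W := by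
    refine commutatorElement_mem_of_mem_closure (X := X) ?_ ?_ (hX ▸ mem_top h)
    · exact fun g c hc ↦ IsConj.trans hc (isConj_iff.mpr ⟨g, rfl⟩)
    · intro y hy c hc
      refine ⟨⟨⁅y, c⁆, hmem y hc⟩, ?_, rfl⟩
      have : (⟨⁅y, c⁆, hmem y hc⟩ : A) ^ E = 1 :=
        Subtype.ext (commutatorElement_pow_eq_one_of_isConj hx₀ hxm (hX₀ y hy) (hXm y hy) hc)
      simp [MonoidHom.mem_ker, ← map_pow, this]
  obtain ⟨h, hh⟩ := ha
  have := hW h x mem_conjugatesOf_self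
  rw [← hh, ← A.coe_subtype, mem_map_iff_mem A.subtype_injective] at this
  simpa using this

theorem card_closure_commutatorElement_le {X : Set G} (hX : closure X = ⊤) {m : ℕ}
    (hX₀ : ∀ y ∈ X, (centralizer {y}).index ≠ 0) (hXm : ∀ y ∈ X, (centralizer {y}).index ≤ m)
    {x : G} (hx₀ : (centralizer {x}).index ≠ 0) (hxm : (centralizer {x}).index ≤ m) :
    Finite (closure {g | ∃ h : G, g = ⁅h, x⁆}) ∧
      Nat.card (closure {g | ∃ h : G, g = ⁅h, x⁆}) ≤
        (cardCommutatorBound ((m ^ (2 * m)) ^ 2))! ^ m *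
          cardCommutatorBound (((m ^ 2) ^ m) ^ 2) := by
  have hS := setOf_commutatorElement_eq_image x
  have hC := finite_conjugatesOf hx₀
  have : Finite {g | ∃ h : G, g = ⁅h, x⁆} := hS ▸ (hC.image _).to_subtype
  have hcard : Nat.card {g | ∃ h : G, g = ⁅h, x⁆} ≤ m := by
    rw [hS]
    refine (Nat.card_image_le hC).trans ?_
    rwa [Nat.card_coe_set_eq, ← index_centralizer_eq_ncard_conjugatesOf]
  have hm : 0 < m := (Nat.pos_of_ne_zero hx₀).trans_le hxm
  refine card_closure_le (by positivity) (Nat.factorial_pos _) hcard ?_ ?_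
    (abelianization_of_pow_eq_one_of_mem_setOf_commutatorElement hX hX₀ hXm hx₀ hxm)
  · rintro _ ⟨h, rfl⟩
    exact (index_centralizer_commutatorElement_le h hx₀).1
  · rintro _ ⟨h, rfl⟩
    exact (index_centralizer_commutatorElement_le h hx₀).2.trans (Nat.pow_le_pow_left hxm 2)

theorem map_subtype_closure_setOf_commutatorElement (H : Subgroup G) (x : H) :
    (closure {g : H | ∃ h : H, g = ⁅h, x⁆}).map H.subtype =
      closure {g | ∃ h ∈ H, g = ⁅h, (x : G)⁆} := by
  rw [MonoidHom.map_closure]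
  congr 1
  ext g
  constructor
  · rintro ⟨_, ⟨h, rfl⟩, rfl⟩
    exact ⟨h, h.2, by simp [commutatorElement_def]⟩
  · rintro ⟨h, hh, rfl⟩
    exact ⟨_, ⟨⟨h, hh⟩, rfl⟩, by simp [commutatorElement_def]⟩

end

theorem stmt9 :
    ∃ f : ℕ → ℕ, ∀ (m : ℕ), 0 < m →
      ∀ (G : Type u) [Group G] (X : Set G),
        (∀ x ∈ X, ∀ g : G, g⁻¹ * x * g ∈ X) →
        (∀ x ∈ X, (Subgroup.centralizer {x}).relIndex (Subgroup.closure X) ≠ 0 ∧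
          (Subgroup.centralizer {x}).relIndex (Subgroup.closure X) ≤ m) →
        ∀ x ∈ X,
          Nat.card (Subgroup.closure {g : G | ∃ h ∈ Subgroup.closure X, g = ⁅h, x⁆}) ≠ 0 ∧
          Nat.card (Subgroup.closure {g : G | ∃ h ∈ Subgroup.closure X, g = ⁅h, x⁆}) ≤ f m := by
  refine ⟨fun m ↦ (cardCommutatorBound ((m ^ (2 * m)) ^ 2))! ^ m *
    cardCommutatorBound (((m ^ 2) ^ m) ^ 2), fun m _ G _ X _ hX x hx ↦ ?_⟩
  have hX' (y : closure X) (hy : (y : G) ∈ X) :=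
    index_centralizer_eq_relIndex (closure X) y ▸ hX y hy
  have hx' := hX' ⟨x, subset_closure hx⟩ hx
  obtain ⟨_, hcard⟩ := card_closure_commutatorElement_le (closure_preimage_eq_top X)
    (fun y hy ↦ (hX' y hy).1) (fun y hy ↦ (hX' y hy).2) hx'.1 hx'.2
  rw [← map_subtype_closure_setOf_commutatorElement (closure X) ⟨x, subset_closure hx⟩,
    card_map_of_injective (subtype_injective _)]
  exact ⟨Nat.card_pos.ne', hcard⟩
end

section
/- For every 0 < ε ≤ 1 there exist positive integers l and n depending only on ε such that: if K is a closed subgroup of a compact group G with Pr(⟨g⟩,G) ≥ ε for all g ∈ K, then [G : C_G(g^l)] ≤ n for all g ∈ K. -/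
open MeasureTheory
open scoped ENNReal

universe u

open Set TopologicalSpace

/-!
Let `H` be the closure of `⟨g⟩` and `D = ⌈2 / ε⌉`. The translates
`{(h, x) | g ^ i h commutes with x}`, `0 ≤ i ≤ D`, of the commuting set in `H × G` all have
measure `Pr(H, G) ≥ ε`, and two of them meet only over pairs `(h, x)` with `x ∈ C_G(g ^ k)` for
some `1 ≤ k ≤ D`. If each of these centralizers had more than `D (D + 1)` cosets, each would lie
in an open set of measure `≤ 1 / (D (D + 1))`, so the translates would be almost disjoint, yet of
total measure `(D + 1) ε > 2`. Hence some `C_G(g ^ k)` has index at most `D (D + 1)`, and so has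
`C_G(g ^ D!) ≥ C_G(g ^ k)`.

The product σ-algebra on `H × G` may be smaller than the Borel one, so the compact sets involved
need not be measurable; disjoint compacta are instead separated by finite unions of open boxes.
-/

section MeasurableBasis

variable {X : Type*} [TopologicalSpace X] [MeasurableSpace X] {B : Set (Set X)}

lemma IsCompact.exists_measurableSet_subset_of_isTopologicalBasis (hB : IsTopologicalBasis B)
    (hBm : ∀ b ∈ B, MeasurableSet b) {K U : Set X} (hK : IsCompact K) (hU : IsOpen U)
    (hKU : K ⊆ U) : ∃ E, MeasurableSet E ∧ K ⊆ E ∧ E ⊆ U := by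
  obtain ⟨T, hTB, hT, hKT⟩ := hK.elim_finite_subcover_image (b := {b ∈ B | b ⊆ U})
    (fun b hb => hB.isOpen hb.1) (by rwa [← sUnion_eq_biUnion, ← hB.open_eq_sUnion' hU])
  exact ⟨⋃ b ∈ T, b, .biUnion hT.countable fun b hb => hBm b (hTB hb).1, hKT,
    iUnion₂_subset fun b hb => (hTB hb).2⟩

variable [T2Space X]

lemma IsCompact.measure_union_of_isTopologicalBasis (hB : IsTopologicalBasis B)
    (hBm : ∀ b ∈ B, MeasurableSet b) (μ : Measure X) {K L : Set X} (hK : IsCompact K)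
    (hL : IsCompact L) (hKL : Disjoint K L) : μ (K ∪ L) = μ K + μ L := by
  obtain ⟨U, V, hU, -, hKU, hLV, hUV⟩ := SeparatedNhds.of_isCompact_isCompact hK hL hKL
  obtain ⟨E, hE, hKE, hEU⟩ := hK.exists_measurableSet_subset_of_isTopologicalBasis hB hBm hU hKU
  have hLE : Disjoint L E := (hUV.mono hEU hLV).symm
  rw [← measure_inter_add_sdiff (K ∪ L) hE, union_inter_distrib_right, inter_eq_left.2 hKE,
    hLE.inter_eq, union_empty, union_sdiff_distrib, sdiff_eq_empty.2 hKE, empty_union,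
    hLE.sdiff_eq_left]

lemma measure_biUnion_finset_of_isCompact (hB : IsTopologicalBasis B)
    (hBm : ∀ b ∈ B, MeasurableSet b) (μ : Measure X) {ι : Type*} {s : Finset ι}
    {K : ι → Set X}
    (hd : (s : Set ι).PairwiseDisjoint K) (hK : ∀ i ∈ s, IsCompact (K i)) :
    μ (⋃ i ∈ s, K i) = ∑ i ∈ s, μ (K i) := by
  classical
  induction s using Finset.induction_on with
  | empty => simp
  | insert a s ha ih =>
    rw [Finset.coe_insert, pairwiseDisjoint_insert] at hd
    rw [Finset.set_biUnion_insert, Finset.sum_insert ha,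
      (hK a (s.mem_insert_self a)).measure_union_of_isTopologicalBasis hB hBm μ
        (s.isCompact_biUnion fun i hi => hK i (s.mem_insert_of_mem hi))
        (disjoint_iUnion₂_right.2 fun i hi => hd.2 i hi (ne_of_mem_of_not_mem hi ha).symm),
      ih hd.1 fun i hi => hK i (s.mem_insert_of_mem hi)]

lemma sum_measure_le_of_inter_subset (hB : IsTopologicalBasis B)
    (hBm : ∀ b ∈ B, MeasurableSet b) (μ : Measure X) {ι : Type*} (s : Finset ι)
    {S : ι → Set X} (hS : ∀ i ∈ s, IsCompact (S i)) {W : Set X} (hW : IsOpen W)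
    (hSW : ∀ i ∈ s, ∀ j ∈ s, i ≠ j → S i ∩ S j ⊆ W) :
    ∑ i ∈ s, μ (S i) ≤ μ univ + s.card * μ W := by
  have hd : (s : Set ι).PairwiseDisjoint fun i => S i \ W := fun i hi j hj hij =>
    disjoint_left.2 fun x hxi hxj => hxi.2 (hSW i hi j hj hij ⟨hxi.1, hxj.1⟩)
  calc ∑ i ∈ s, μ (S i) ≤ ∑ i ∈ s, (μ (S i \ W) + μ W) :=
        Finset.sum_le_sum fun i _ => tsub_le_iff_right.1 le_measure_sdiff
    _ = μ (⋃ i ∈ s, S i \ W) + s.card * μ W := by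
        rw [Finset.sum_add_distrib, measure_biUnion_finset_of_isCompact hB hBm μ hd
          fun i hi => (hS i hi).diff hW, Finset.sum_const, nsmul_eq_mul]
    _ ≤ μ univ + s.card * μ W := by gcongr; exact subset_univ _

end MeasurableBasis

instance Prod.measurableMul {M N : Type*} [Mul M] [Mul N] [MeasurableSpace M]
    [MeasurableSpace N] [MeasurableMul M] [MeasurableMul N] : MeasurableMul (M × N) where
  measurable_const_mul c := (measurable_const_mul c.1).prodMap (measurable_const_mul c.2)
  measurable_mul_const c := (measurable_mul_const c.1).prodMap (measurable_mul_const c.2)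

section CosetRepresentatives

variable {G : Type*} [Group G]

lemma Subgroup.exists_injective_fin_of_index (C : Subgroup G) {M : ℕ}
    (hM : C.index = 0 ∨ M ≤ C.index) :
    ∃ y : Fin M → G, Function.Injective ((↑) ∘ y : Fin M → G ⧸ C) := by
  have hcard : (M : ℕ∞) + (∅ : Set (G ⧸ C)).ncard ≤ ENat.card (G ⧸ C) := by
    rcases finite_or_infinite (G ⧸ C) with hfin | hinf
    · rw [ENat.card_eq_coe_natCard, ← Subgroup.index]
      simpa [C.index_ne_zero_of_finite] using hM
    · simp
  obtain ⟨q, -⟩ := Fin.Embedding.exists_embedding_disjoint_range_of_add_le_ENat_card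
    (s := (∅ : Set (G ⧸ C))) (by rwa [add_comm] at hcard)
  exact ⟨fun i => (q i).out, by simpa [Function.comp_def] using q.injective⟩

variable [TopologicalSpace G] [IsTopologicalGroup G] [T2Space G]

/-- `U` comes from the tube lemma, so that the translates `y i * U` are pairwise disjoint. -/
lemma Subgroup.exists_isOpen_measure_le_inv [MeasurableSpace G] [BorelSpace G]
    (μ : Measure G) [μ.IsMulLeftInvariant] [IsProbabilityMeasure μ] (C : Subgroup G)
    (hC : IsCompact (C : Set G)) {M : ℕ} (y : Fin M → G)
    (hy : Function.Injective ((↑) ∘ y : Fin M → G ⧸ C)) :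
    ∃ U : Set G, IsOpen U ∧ (C : Set G) ⊆ U ∧ μ U ≤ (M : ℝ≥0∞)⁻¹ := by
  set N : Set (G × G) := {p | ∀ i j, i ≠ j → p.1 * p.2⁻¹ ≠ (y i)⁻¹ * y j}
  have hN : IsOpen N := by
    simp only [N, ofPred_forall]
    exact isOpen_iInter_of_finite fun i => isOpen_iInter_of_finite fun j =>
      isOpen_iInter_of_finite fun _ => isOpen_ne_fun (by fun_prop) continuous_const
  have hCN : (C : Set G) ×ˢ (C : Set G) ⊆ N := by
    rintro ⟨a, b⟩ ⟨ha, hb⟩ i j hij hab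
    refine hij (hy (QuotientGroup.eq.2 ?_))
    rw [← hab]
    exact C.mul_mem ha (C.inv_mem hb)
  obtain ⟨u, v, hu, hv, hCu, hCv, huv⟩ := generalized_tube_lemma hC hC hN hCN
  refine ⟨u ∩ v, hu.inter hv, subset_inter hCu hCv, ?_⟩
  have hd :
      Pairwise (Function.onFun Disjoint fun i => (fun z => (y i)⁻¹ * z) ⁻¹' (u ∩ v)) := by
    intro i j hij
    refine disjoint_left.2 fun z hi hj =>
      huv (show ((y i)⁻¹ * z, (y j)⁻¹ * z) ∈ u ×ˢ v from ⟨hi.1, hj.2⟩) i j hij ?_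
    group
  have hsum := tsum_measure_le_measure_univ (μ := μ)
    (fun i => ((hu.inter hv).preimage (continuous_const_mul _)).measurableSet.nullMeasurableSet)
    (fun i j hij => (hd hij).aedisjoint)
  simp only [measure_preimage_mul, tsum_fintype, Finset.sum_const, Finset.card_univ,
    Fintype.card_fin, nsmul_eq_mul, measure_univ] at hsum
  rwa [ENNReal.le_inv_iff_mul_le, mul_comm]

end CosetRepresentatives

section Centralizers

variable {G : Type*} [Group G]

lemma Commute.pow_sub_of_mul {g h x : G} {i j : ℕ} (hij : i ≤ j)
    (hi : Commute (g ^ i * h) x) (hj : Commute (g ^ j * h) x) : Commute (g ^ (j - i)) x := by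
  have : g ^ (j - i) = g ^ j * h * (g ^ i * h)⁻¹ := by
    rw [pow_sub g hij]
    group
  exact this ▸ hj.mul_left hi.inv_left

lemma Subgroup.centralizer_pow_le_of_dvd (g : G) {k m : ℕ} (hkm : k ∣ m) :
    centralizer {g ^ k} ≤ centralizer {g ^ m} := by
  obtain ⟨c, rfl⟩ := hkm
  intro x hx
  rw [mem_centralizer_singleton_iff] at hx ⊢
  rw [pow_mul]
  exact ((Commute.pow_left hx.symm c).symm).eq

lemma Subgroup.index_eq_zero_or_lt_of_le {H K : Subgroup G} (hHK : H ≤ K) {n : ℕ}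
    (hK : K.index = 0 ∨ n < K.index) : H.index = 0 ∨ n < H.index := by
  refine or_iff_not_imp_left.2 fun hH => ?_
  have hdvd := index_dvd_of_le hHK
  have hK0 : K.index ≠ 0 := fun h0 => hH (zero_dvd_iff.1 (h0 ▸ hdvd))
  have := Nat.le_of_dvd (Nat.pos_of_ne_zero hH) hdvd
  omega

end Centralizers

section CommutingProbability

variable {G : Type*} [Group G] [TopologicalSpace G] [IsTopologicalGroup G] [CompactSpace G]
  [T2Space G] [MeasurableSpace G] [BorelSpace G]
  {H : Subgroup G} [CompactSpace H] (ν : Measure H) [ν.IsMulLeftInvariant]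
  [IsProbabilityMeasure ν] (μ : Measure G) [μ.IsMulLeftInvariant] [IsProbabilityMeasure μ]

lemma card_mul_haarCommProb_le {g : G} (hg : g ∈ H) (D : ℕ) {U : Set G} (hU : IsOpen U)
    (hCU : ∀ k ∈ Finset.Icc 1 D, (Subgroup.centralizer {g ^ k} : Set G) ⊆ U) :
    (D + 1) * haarCommProb H ν μ ≤ 1 + (D + 1) * μ U := by
  set S : ℕ → Set (H × G) := fun i =>
    (fun p => ((⟨g, hg⟩ : H) ^ i, (1 : G)) * p) ⁻¹' {p | Commute (p.1 : G) p.2}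
  have hS : ∀ i, (ν.prod μ) (S i) = haarCommProb H ν μ := fun i => measure_preimage_mul _ _ _
  have hmem : ∀ i (p : H × G), p ∈ S i ↔ Commute (g ^ i * p.1) p.2 := by
    simp [S]
  have hSc : ∀ i ∈ Finset.range (D + 1), IsCompact (S i) := fun i _ =>
    ((isClosed_eq (by fun_prop) (by fun_prop)).preimage (continuous_const_mul _)).isCompact
  have hSU : ∀ i ∈ Finset.range (D + 1), ∀ j ∈ Finset.range (D + 1), i ≠ j →
      S i ∩ S j ⊆ univ ×ˢ U := by
    intro i hi j hj hij
    wlog hlt : i < j generalizing i j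
    · rw [inter_comm]
      exact this j hj i hi hij.symm (hij.lt_or_gt.resolve_left hlt)
    rintro p ⟨hpi, hpj⟩
    refine ⟨trivial, hCU (j - i) ?_ ?_⟩
    · simp only [Finset.mem_range] at hj
      simp only [Finset.mem_Icc]
      omega
    · exact Subgroup.mem_centralizer_singleton_iff.2
        ((Commute.pow_sub_of_mul hlt.le ((hmem i p).1 hpi) ((hmem j p).1 hpj)).eq.symm)
  have := sum_measure_le_of_inter_subset
    (isTopologicalBasis_opens.prod isTopologicalBasis_opens)
    (by
      rintro _ ⟨u, hu, v, hv, rfl⟩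
      exact (show IsOpen u from hu).measurableSet.prod (show IsOpen v from hv).measurableSet)
    (ν.prod μ) (Finset.range (D + 1)) hSc (isOpen_univ.prod hU) hSU
  simpa [hS, Measure.prod_prod] using this

lemma card_mul_haarCommProb_le_two {g : G} (hg : g ∈ H) (D : ℕ)
    (hidx : ∀ k ∈ Finset.Icc 1 D, (Subgroup.centralizer {g ^ k}).index = 0 ∨
      D * (D + 1) < (Subgroup.centralizer {g ^ k}).index) :
    (D + 1) * haarCommProb H ν μ ≤ 2 := by
  have hU : ∀ k ∈ Finset.Icc 1 D, ∃ U : Set G, IsOpen U ∧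
      (Subgroup.centralizer {g ^ k} : Set G) ⊆ U ∧
      μ U ≤ ((D * (D + 1) : ℕ) : ℝ≥0∞)⁻¹ := by
    intro k hk
    obtain ⟨y, hy⟩ := (Subgroup.centralizer {g ^ k}).exists_injective_fin_of_index
      ((hidx k hk).imp_right le_of_lt)
    exact (Subgroup.centralizer _).exists_isOpen_measure_le_inv μ
      (Set.isClosed_centralizer _).isCompact y hy
  choose! U hUo hCU hμU using hU
  have hμU : (D + 1) * μ (⋃ k ∈ Finset.Icc 1 D, U k) ≤ 1 := calc
    _ ≤ (D + 1) * ∑ k ∈ Finset.Icc 1 D, μ (U k) := by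
        gcongr
        exact measure_biUnion_finset_le _ _
    _ ≤ (D + 1) * (D * ((D * (D + 1) : ℕ) : ℝ≥0∞)⁻¹) := by
        gcongr
        simpa using Finset.sum_le_card_nsmul _ _ _ hμU
    _ = ((D * (D + 1) : ℕ) : ℝ≥0∞) * ((D * (D + 1) : ℕ) : ℝ≥0∞)⁻¹ := by
        push_cast; ring
    _ ≤ 1 := ENNReal.mul_inv_le_one _
  calc (D + 1) * haarCommProb H ν μ ≤ 1 + (D + 1) * μ (⋃ k ∈ Finset.Icc 1 D, U k) :=
        card_mul_haarCommProb_le ν μ hg D (isOpen_biUnion hUo)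
          fun k hk => (hCU k hk).trans (subset_biUnion_of_mem hk)
    _ ≤ 2 := by
        rw [← one_add_one_eq_two]
        gcongr

end CommutingProbability

lemma two_lt_ceil_two_div_add_one_mul_ofReal {ε : ℝ} (hε : 0 < ε) :
    2 < ((⌈2 / ε⌉₊ : ℝ≥0∞) + 1) * ENNReal.ofReal ε := by
  have hceil := Nat.le_ceil (2 / ε)
  rw [div_le_iff₀ hε] at hceil
  rw [← ENNReal.ofReal_natCast, ← ENNReal.ofReal_one, ← ENNReal.ofReal_add (by positivity)
    zero_le_one, ← ENNReal.ofReal_mul (by positivity), ← ENNReal.ofReal_ofNat,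
    ENNReal.ofReal_lt_ofReal_iff (by positivity)]
  linarith

theorem stmt12_general (ε : ℝ) (hε0 : 0 < ε) :
    ∃ l n : ℕ, 0 < l ∧ 0 < n ∧
      ∀ (G : Type u) [Group G] [TopologicalSpace G] [IsTopologicalGroup G]
        [CompactSpace G] [T2Space G] [MeasurableSpace G] [BorelSpace G]
        (μ : Measure G), μ.IsHaarMeasure → IsProbabilityMeasure μ →
        ∀ (K : Subgroup G), IsClosed (K : Set G) →
        (∀ g ∈ K, ∀ (ν : Measure ((Subgroup.zpowers g).topologicalClosure)),
          ν.IsHaarMeasure → IsProbabilityMeasure ν →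
          ENNReal.ofReal ε ≤ haarCommProb ((Subgroup.zpowers g).topologicalClosure) ν μ) →
        ∀ g ∈ K, (Subgroup.centralizer {g ^ l}).index ≠ 0 ∧
          (Subgroup.centralizer {g ^ l}).index ≤ n := by
  set D := ⌈2 / ε⌉₊
  refine ⟨D.factorial, D * (D + 1), D.factorial_pos, by positivity, ?_⟩
  intro G _ _ _ _ _ _ _ μ hμ _ K _ hPr g hg
  by_contra hidx
  set H := (Subgroup.zpowers g).topologicalClosure
  have : CompactSpace H :=
    isCompact_iff_compactSpace.1 (Subgroup.isClosed_topologicalClosure _).isCompact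
  let ν : Measure H := Measure.haarMeasure ⊤
  have : IsProbabilityMeasure ν := ⟨Measure.haarMeasure_self⟩
  have h2 := card_mul_haarCommProb_le_two ν μ
    (Subgroup.le_topologicalClosure _ (Subgroup.mem_zpowers g)) D fun k hk =>
      Subgroup.index_eq_zero_or_lt_of_le
        (Subgroup.centralizer_pow_le_of_dvd g (Nat.dvd_factorial (Finset.mem_Icc.1 hk).1
          (Finset.mem_Icc.1 hk).2)) (by omega)
  refine (two_lt_ceil_two_div_add_one_mul_ofReal hε0).not_ge (le_trans ?_ h2)
  gcongr
  exact hPr g hg ν inferInstance inferInstance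

theorem stmt12 (ε : ℝ) (hε0 : 0 < ε) (hε1 : ε ≤ 1) :
    ∃ l n : ℕ, 0 < l ∧ 0 < n ∧
      ∀ (G : Type u) [Group G] [TopologicalSpace G] [IsTopologicalGroup G]
        [CompactSpace G] [T2Space G] [MeasurableSpace G] [BorelSpace G]
        (μ : Measure G), μ.IsHaarMeasure → IsProbabilityMeasure μ →
        ∀ (K : Subgroup G), IsClosed (K : Set G) →
        (∀ g ∈ K, ∀ (ν : Measure ((Subgroup.zpowers g).topologicalClosure)),
          ν.IsHaarMeasure → IsProbabilityMeasure ν →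
          ENNReal.ofReal ε ≤ haarCommProb ((Subgroup.zpowers g).topologicalClosure) ν μ) →
        ∀ g ∈ K, (Subgroup.centralizer {g ^ l}).index ≠ 0 ∧
          (Subgroup.centralizer {g ^ l}).index ≤ n :=
  stmt12_general ε hε0
end

section
/- For any positive integers s, e, m there is 0 < ε ≤ 1 depending only on s, e, m with the property: if K is a closed subgroup of a compact group G and G has a closed normal subgroup T of index at most s such that [K^e, T] has order at most m, then Pr(⟨g⟩, G) ≥ ε for every g ∈ K. -/
open MeasureTheory
open scoped ENNReal

universe u

/-!
Let `C` be the centralizer of `g ^ e` in `G` and `A` the closed subgroup generated by `g ^ e`.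
Since `⁅g ^ e, t⁆ = ⁅g ^ e, t'⁆` exactly when `t⁻¹ t'` centralizes `g ^ e`, the map
`t ↦ ⁅g ^ e, t⁆` embeds `T ⧸ (C ⊓ T)` into `⁅K ^ e, T⁆`, so `C` has index at most `m s` in `G`.
The finitely many translates `g ^ i • A`, `i < e`, form a closed set containing every power of `g`,
so `A` has index at most `e` in the closed subgroup generated by `g`. Every element of `A`
commutes with every element of `C`, hence `Pr(⟨g⟩, G) ≥ ν(A) μ(C) ≥ 1 / (e m s)`.
-/

open scoped commutatorElement Pointwise

theorem commutatorElement_eq_commutatorElement_iff {G : Type*} [Group G] {a x y : G} :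
    ⁅a, x⁆ = ⁅a, y⁆ ↔ Commute a (x⁻¹ * y) := by
  have h : ⁅a, x⁆⁻¹ * ⁅a, y⁆ = x * ⁅a, x⁻¹ * y⁆ * x⁻¹ := by
    simp only [commutatorElement_def]; group
  rw [← inv_mul_eq_one, h, conj_eq_one_iff, commutatorElement_eq_one_iff_commute]

namespace Subgroup

variable {G : Type*} [Group G]

section Centralizer

variable {H T : Subgroup G} {a : G}

theorem nonempty_quotient_centralizer_embedding_commutator (ha : a ∈ H) :
    Nonempty (T ⧸ (centralizer {a}).subgroupOf T ↪ (⁅H, T⁆ : Subgroup G)) := by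
  let f : T → (⁅H, T⁆ : Subgroup G) := fun t => ⟨⁅a, (t : G)⁆, commutator_mem_commutator ha t.2⟩
  have hf : ∀ t t' : T, f t = f t' ↔ (t : T ⧸ (centralizer {a}).subgroupOf T) = t' := by
    intro t t'
    rw [QuotientGroup.eq, mem_subgroupOf, Subtype.ext_iff, coe_mul, coe_inv,
      mem_centralizer_singleton_iff, commutatorElement_eq_commutatorElement_iff]
    exact eq_comm
  refine ⟨⟨Quotient.lift f fun t t' h => (hf t t').2 (Quotient.sound h), ?_⟩⟩
  rintro ⟨t⟩ ⟨t'⟩ h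
  exact (hf t t').1 h

theorem index_centralizer_inf_eq (a : G) (T : Subgroup G) :
    (centralizer {a} ⊓ T).index = (centralizer {a}).relIndex T * T.index := by
  rw [← relIndex_mul_index inf_le_right, inf_relIndex_right]

theorem relIndex_centralizer_le_card_commutator [Finite (⁅H, T⁆ : Subgroup G)] (ha : a ∈ H) :
    (centralizer {a}).relIndex T ≤ Nat.card (⁅H, T⁆ : Subgroup G) :=
  let ⟨f⟩ := nonempty_quotient_centralizer_embedding_commutator (T := T) ha
  Nat.card_le_card_of_injective f f.injective

theorem relIndex_centralizer_ne_zero [Finite (⁅H, T⁆ : Subgroup G)] (ha : a ∈ H) :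
    (centralizer {a}).relIndex T ≠ 0 :=
  let ⟨f⟩ := nonempty_quotient_centralizer_embedding_commutator (T := T) ha
  have := Finite.of_injective f f.injective
  index_ne_zero_of_finite

theorem finiteIndex_centralizer_inf [Finite (⁅H, T⁆ : Subgroup G)] [T.FiniteIndex] (ha : a ∈ H) :
    (centralizer {a} ⊓ T).FiniteIndex := by
  constructor
  rw [index_centralizer_inf_eq]
  exact mul_ne_zero (relIndex_centralizer_ne_zero ha) FiniteIndex.index_ne_zero

theorem finiteIndex_centralizer (T : Subgroup G) [Finite (⁅H, T⁆ : Subgroup G)] [T.FiniteIndex]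
    (ha : a ∈ H) : (centralizer {a}).FiniteIndex :=
  have := finiteIndex_centralizer_inf (T := T) ha
  finiteIndex_of_le (H := centralizer {a} ⊓ T) inf_le_left

theorem index_centralizer_le [Finite (⁅H, T⁆ : Subgroup G)] [T.FiniteIndex] (ha : a ∈ H) :
    (centralizer {a}).index ≤ Nat.card (⁅H, T⁆ : Subgroup G) * T.index := by
  have := finiteIndex_centralizer_inf (T := T) ha
  calc (centralizer {a}).index ≤ (centralizer {a} ⊓ T).index := index_antitone inf_le_left
    _ = (centralizer {a}).relIndex T * T.index := index_centralizer_inf_eq a T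
    _ ≤ Nat.card (⁅H, T⁆ : Subgroup G) * T.index :=
      Nat.mul_le_mul_right _ (relIndex_centralizer_le_card_commutator ha)

end Centralizer

theorem iUnion_smul_subgroupOf_eq_univ {A L : Subgroup G} {ι : Type*} {s : Finset ι} {x : ι → L}
    (hcover : (L : Set G) ⊆ ⋃ i ∈ s, (x i : G) • (A : Set G)) :
    ⋃ i ∈ s, x i • (A.subgroupOf L : Set L) = Set.univ := by
  refine Set.eq_univ_of_forall fun y => ?_
  obtain ⟨i, hi, hy⟩ := Set.mem_iUnion₂.1 (hcover y.2)
  obtain ⟨z, hz, hzy⟩ := Set.mem_smul_set.1 hy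
  refine Set.mem_biUnion hi ⟨(x i)⁻¹ * y, ?_, by simp⟩
  rwa [SetLike.mem_coe, mem_subgroupOf, coe_mul, coe_inv, ← hzy, smul_eq_mul, inv_mul_cancel_left]

variable [TopologicalSpace G] [IsTopologicalGroup G]

theorem topologicalClosure_zpowers_subset_iUnion_pow_smul (g : G) {e : ℕ} (he : 0 < e) :
    ((zpowers g).topologicalClosure : Set G) ⊆
      ⋃ i ∈ Finset.range e, g ^ i • ((zpowers (g ^ e)).topologicalClosure : Set G) := by
  rw [topologicalClosure_coe]
  refine closure_minimal ?_ <| isClosed_biUnion_finset fun i _ =>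
    (isClosed_topologicalClosure _).smul _
  rintro _ ⟨n, rfl⟩
  obtain ⟨i, hi⟩ := Int.eq_ofNat_of_zero_le (Int.emod_nonneg n (Int.natCast_ne_zero.2 he.ne'))
  refine Set.mem_biUnion (x := i) (Finset.mem_range.2 ?_)
    ⟨(g ^ e) ^ (n / e), le_topologicalClosure _ ⟨n / e, rfl⟩, ?_⟩
  · have := Int.emod_lt_of_pos n (Int.natCast_pos.2 he)
    omega
  · simp only [smul_eq_mul, ← zpow_natCast, ← zpow_mul, ← zpow_add, ← hi, Int.emod_add_mul_ediv]

theorem iUnion_pow_smul_topologicalClosure_zpowers_pow (g : G) {e : ℕ} (he : 0 < e) :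
    ⋃ i ∈ Finset.range e,
      (⟨g, le_topologicalClosure _ (mem_zpowers g)⟩ : (zpowers g).topologicalClosure) ^ i •
        ((zpowers (g ^ e)).topologicalClosure.subgroupOf (zpowers g).topologicalClosure :
          Set (zpowers g).topologicalClosure) = Set.univ :=
  iUnion_smul_subgroupOf_eq_univ (topologicalClosure_zpowers_subset_iUnion_pow_smul g he)

theorem relIndex_topologicalClosure_zpowers_pow_le (g : G) {e : ℕ} (he : 0 < e) :
    (zpowers (g ^ e)).topologicalClosure.relIndex (zpowers g).topologicalClosure ≤ e :=
  (index_le_of_leftCoset_cover_const (iUnion_pow_smul_topologicalClosure_zpowers_pow g he)).trans_eq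
    (Finset.card_range e)

theorem finiteIndex_topologicalClosure_zpowers_pow (g : G) {e : ℕ} (he : 0 < e) :
    ((zpowers (g ^ e)).topologicalClosure.subgroupOf (zpowers g).topologicalClosure).FiniteIndex :=
  finiteIndex_of_leftCoset_cover_const (iUnion_pow_smul_topologicalClosure_zpowers_pow g he)

end Subgroup

theorem inv_le_measure_of_index_le {G : Type*} [Group G] [MeasurableSpace G] [MeasurableMul G]
    (μ : Measure G) [IsProbabilityMeasure μ] [μ.IsMulLeftInvariant] {H : Subgroup G}
    [H.FiniteIndex] (hH : MeasurableSet (H : Set G)) {n : ℕ} (hn : H.index ≤ n) :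
    (n : ℝ≥0∞)⁻¹ ≤ μ H := by
  have h := H.index_mul_measure hH μ
  rw [measure_univ] at h
  calc (n : ℝ≥0∞)⁻¹ ≤ (H.index : ℝ≥0∞)⁻¹ := ENNReal.inv_le_inv.2 (by exact_mod_cast hn)
    _ = μ H := (ENNReal.eq_inv_of_mul_eq_one_left ((mul_comm _ _).trans h)).symm

theorem measure_mul_measure_le_haarCommProb {G : Type*} [Group G] [MeasurableSpace G]
    {K : Subgroup G} (ν : Measure K) (μ : Measure G) [SFinite μ] {A : Set K} {B : Set G}
    (hAB : ∀ a ∈ A, ∀ b ∈ B, Commute (a : G) b) : ν A * μ B ≤ haarCommProb K ν μ := by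
  rw [haarCommProb, ← Measure.prod_prod]
  exact measure_mono fun p hp => hAB p.1 hp.1 p.2 hp.2

open Subgroup in
theorem inv_le_haarCommProb_topologicalClosure_zpowers {G : Type*} [Group G] [TopologicalSpace G]
    [IsTopologicalGroup G] [T2Space G] [MeasurableSpace G] [BorelSpace G]
    (μ : Measure G) [IsProbabilityMeasure μ] [μ.IsMulLeftInvariant]
    {H T : Subgroup G} [Finite (⁅H, T⁆ : Subgroup G)] [T.FiniteIndex] {g : G} {e : ℕ} (he : 0 < e)
    (hg : g ^ e ∈ H) (ν : Measure (zpowers g).topologicalClosure)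
    [IsProbabilityMeasure ν] [ν.IsMulLeftInvariant] :
    ((e * Nat.card (⁅H, T⁆ : Subgroup G) * T.index : ℕ) : ℝ≥0∞)⁻¹ ≤
      haarCommProb (zpowers g).topologicalClosure ν μ := by
  set A := (zpowers (g ^ e)).topologicalClosure
  set C := centralizer {g ^ e}
  have : C.FiniteIndex := finiteIndex_centralizer T hg
  have : (A.subgroupOf (zpowers g).topologicalClosure).FiniteIndex :=
    finiteIndex_topologicalClosure_zpowers_pow g he
  have hνA : (e : ℝ≥0∞)⁻¹ ≤ ν (A.subgroupOf (zpowers g).topologicalClosure) :=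
    inv_le_measure_of_index_le ν
      ((isClosed_topologicalClosure _).preimage continuous_subtype_val).measurableSet
      (relIndex_topologicalClosure_zpowers_pow_le g he)
  have hμC : ((Nat.card (⁅H, T⁆ : Subgroup G) * T.index : ℕ) : ℝ≥0∞)⁻¹ ≤ μ C :=
    inv_le_measure_of_index_le μ (Set.isClosed_centralizer _).measurableSet
      (index_centralizer_le hg)
  have hAC : ∀ a ∈ A.subgroupOf (zpowers g).topologicalClosure, ∀ c ∈ C,
      Commute (a : G) c := by
    intro a ha c hc
    have hgc : g ^ e ∈ centralizer {c} :=
      mem_centralizer_singleton_iff.2 (mem_centralizer_singleton_iff.1 hc).symm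
    exact mem_centralizer_singleton_iff.1 <| topologicalClosure_minimal _
      (zpowers_le.2 hgc) (Set.isClosed_centralizer _) ha
  calc ((e * Nat.card (⁅H, T⁆ : Subgroup G) * T.index : ℕ) : ℝ≥0∞)⁻¹
      = (e : ℝ≥0∞)⁻¹ * ((Nat.card (⁅H, T⁆ : Subgroup G) * T.index : ℕ) : ℝ≥0∞)⁻¹ := by
        rw [← ENNReal.mul_inv (by simp [he.ne']) (by simp), mul_assoc]
        norm_cast
    _ ≤ ν (A.subgroupOf (zpowers g).topologicalClosure) * μ C := mul_le_mul' hνA hμC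
    _ ≤ haarCommProb (zpowers g).topologicalClosure ν μ :=
      measure_mul_measure_le_haarCommProb ν μ hAC

theorem stmt14 (s e m : ℕ) (hs : 0 < s) (he : 0 < e) (hm : 0 < m) :
    ∃ ε : ℝ, 0 < ε ∧ ε ≤ 1 ∧
      ∀ (G : Type u) [Group G] [TopologicalSpace G] [IsTopologicalGroup G]
        [CompactSpace G] [T2Space G] [MeasurableSpace G] [BorelSpace G]
        (μ : Measure G), μ.IsHaarMeasure → IsProbabilityMeasure μ →
        ∀ (K T : Subgroup G), IsClosed (K : Set G) → IsClosed (T : Set G) →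
        T.Normal → T.index ≠ 0 → T.index ≤ s →
        Nat.card (⁅Subgroup.closure {x : G | ∃ k ∈ K, x = k ^ e}, T⁆ : Subgroup G) ≠ 0 →
        Nat.card (⁅Subgroup.closure {x : G | ∃ k ∈ K, x = k ^ e}, T⁆ : Subgroup G) ≤ m →
        ∀ g ∈ K, ∀ (ν : Measure ((Subgroup.zpowers g).topologicalClosure)),
          ν.IsHaarMeasure → IsProbabilityMeasure ν →
          ENNReal.ofReal ε ≤ haarCommProb ((Subgroup.zpowers g).topologicalClosure) ν μ := by
  refine ⟨((e * m * s : ℕ) : ℝ)⁻¹, by positivity,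
    inv_le_one_of_one_le₀ (by exact_mod_cast Nat.one_le_iff_ne_zero.2 (by positivity)), ?_⟩
  intro G _ _ _ _ _ _ _ μ _ _ K T _ _ _ hT₀ hTs hM₀ hMm g hg ν _ _
  have := Nat.finite_of_card_ne_zero hM₀
  have : T.FiniteIndex := ⟨hT₀⟩
  have hge : g ^ e ∈ Subgroup.closure {x : G | ∃ k ∈ K, x = k ^ e} :=
    Subgroup.subset_closure ⟨g, hg, rfl⟩
  calc ENNReal.ofReal ((e * m * s : ℕ) : ℝ)⁻¹ = ((e * m * s : ℕ) : ℝ≥0∞)⁻¹ := by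
        rw [ENNReal.ofReal_inv_of_pos (by positivity), ENNReal.ofReal_natCast]
    _ ≤ _ := ENNReal.inv_le_inv.2 (by exact_mod_cast Nat.mul_le_mul (Nat.mul_le_mul_left e hMm) hTs)
    _ ≤ _ := inv_le_haarCommProb_topologicalClosure_zpowers μ he hge ν
end

section
/- Let G be a compact group with connected component of the identity G₀. If Pr(G₀, G) > 0, then the centralizer C_G(G₀) is open in G. -/
open MeasureTheory
open scoped ENNReal

open Topology Set Filter

/-!
Let `S = {(k, g) : k g = g k} ⊆ G₀ × G` and `C = C_G(G₀)`. For `g ∉ C`, the fibre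
`{k ∈ G₀ : k g = g k}` is a proper closed subgroup of the connected group `G₀`, so it is not open,
hence Haar-null by Steinhaus' theorem. If `C` were not open, Steinhaus would likewise make the
closed subgroup `C` Haar-null; then `S` has null fibres off a null set and is itself null,
i.e. `Pr(G₀, G) = 0`.
-/

theorem ENNReal.eq_zero_of_forall_le_mul {a c : ℝ≥0∞} (hc : c ≠ ∞) (h : ∀ ε > 0, a ≤ ε * c) :
    a = 0 := by
  have hlim : Tendsto (fun ε : ℝ≥0∞ => ε * c) (𝓝[>] 0) (𝓝 0) := by
    simpa using ENNReal.Tendsto.mul_const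
      (tendsto_nhdsWithin_of_tendsto_nhds (tendsto_id (x := 𝓝 (0 : ℝ≥0∞)))) (Or.inr hc)
  exact nonpos_iff_eq_zero.mp (ge_of_tendsto hlim (eventually_nhdsWithin_of_forall h))

theorem Subgroup.isOpen_of_measure_pos {G : Type*} [Group G] [TopologicalSpace G]
    [IsTopologicalGroup G] [LocallyCompactSpace G] [MeasurableSpace G] [BorelSpace G]
    (μ : Measure G) [μ.IsHaarMeasure] [μ.InnerRegular] {H : Subgroup G}
    (hH : MeasurableSet (H : Set G)) (hpos : 0 < μ H) : IsOpen (H : Set G) :=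
  H.isOpen_of_mem_nhds <| by
    simpa only [coe_div_coe] using μ.div_mem_nhds_one_of_haar_pos _ hH hpos

theorem Subgroup.eq_top_of_measure_pos {G : Type*} [Group G] [TopologicalSpace G]
    [IsTopologicalGroup G] [LocallyCompactSpace G] [ConnectedSpace G] [MeasurableSpace G]
    [BorelSpace G] (μ : Measure G) [μ.IsHaarMeasure] [μ.InnerRegular] {H : Subgroup G}
    (hH : MeasurableSet (H : Set G)) (hpos : 0 < μ H) : H = ⊤ := by
  have hopen := H.isOpen_of_measure_pos μ hH hpos
  exact Subgroup.coe_eq_univ.mp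
    (IsClopen.eq_univ ⟨H.isClosed_of_isOpen hopen, hopen⟩ ⟨1, H.one_mem⟩)

theorem IsClosed.eventually_preimage_mk_subset {X Y : Type*} [TopologicalSpace X]
    [TopologicalSpace Y] [CompactSpace X] {S : Set (X × Y)} (hS : IsClosed S) {V : Set X}
    (hV : IsOpen V) {y₀ : Y} (h : (·, y₀) ⁻¹' S ⊆ V) : ∀ᶠ y in 𝓝 y₀, (·, y) ⁻¹' S ⊆ V := by
  have hclosed : IsClosed (Prod.snd '' (S ∩ Prod.fst ⁻¹' Vᶜ)) :=
    isClosedMap_snd_of_compactSpace _ (hS.inter (hV.isClosed_compl.preimage continuous_fst))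
  have hy₀ : y₀ ∉ Prod.snd '' (S ∩ Prod.fst ⁻¹' Vᶜ) := by
    rintro ⟨⟨x, _⟩, ⟨hx, hxV⟩, rfl⟩
    exact hxV (h hx)
  filter_upwards [hclosed.isOpen_compl.mem_nhds hy₀] with y hy x hx
  by_contra hxV
  exact hy ⟨(x, y), ⟨hx, hxV⟩, rfl⟩

theorem MeasureTheory.Measure.prod_le_of_preimage_mk_le {X Y : Type*} [MeasurableSpace X]
    [MeasurableSpace Y] (ν : Measure X) (μ : Measure Y) [SFinite ν] [SFinite μ]
    {T : Set (X × Y)} (hT : MeasurableSet T) {ε : ℝ≥0∞} (h : ∀ y, ν ((·, y) ⁻¹' T) ≤ ε) :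
    ν.prod μ T ≤ ε * μ univ := by
  rw [Measure.prod_apply_symm hT, ← lintegral_const]
  exact lintegral_mono h

/- A closed `S` need not be measurable for the product σ-algebra (`Y` need not be second
countable), so instead of Tonelli we cover `S` off a small open `U ⊇ N` by a measurable set with
small fibres, built from finitely many tubes around the fibres of `S`. -/
theorem IsClosed.measure_prod_eq_zero {X Y : Type*} [TopologicalSpace X] [TopologicalSpace Y]
    [CompactSpace X] [CompactSpace Y] [MeasurableSpace X] [OpensMeasurableSpace X]
    [MeasurableSpace Y] [OpensMeasurableSpace Y] (ν : Measure X) (μ : Measure Y)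
    [IsFiniteMeasure ν] [IsFiniteMeasure μ] [ν.OuterRegular] [μ.OuterRegular]
    {S : Set (X × Y)} (hS : IsClosed S) {N : Set Y} (hN : μ N = 0)
    (hfiber : ∀ y ∉ N, ν ((·, y) ⁻¹' S) = 0) : ν.prod μ S = 0 := by
  refine ENNReal.eq_zero_of_forall_le_mul (c := ν univ + μ univ) (by finiteness) fun ε hε => ?_
  obtain ⟨U, hNU, hU, hUε⟩ := N.exists_isOpen_lt_of_lt ε (hN ▸ hε)
  have hsmall : ∀ y ∈ Uᶜ, ∃ V : Set X, IsOpen V ∧ ν V < ε ∧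
      ∃ W : Set Y, IsOpen W ∧ y ∈ W ∧ ∀ y' ∈ W, (·, y') ⁻¹' S ⊆ V := by
    intro y hy
    obtain ⟨V, hSV, hV, hVε⟩ :=
      ((·, y) ⁻¹' S).exists_isOpen_lt_of_lt ε (hfiber y (fun h => hy (hNU h)) ▸ hε)
    obtain ⟨W, hW, hWopen, hyW⟩ :=
      eventually_nhds_iff.mp (hS.eventually_preimage_mk_subset hV hSV)
    exact ⟨V, hV, hVε, W, hWopen, hyW, hW⟩
  choose! V hVopen hVε W hWopen hyW hWV using hsmall
  obtain ⟨t, htU, htfin, hcover⟩ :=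
    hU.isClosed_compl.isCompact.elim_finite_subcover_image hWopen
      fun y hy => mem_biUnion hy (hyW y hy)
  set T : Set (X × Y) := (univ ×ˢ Uᶜ) ∩ ⋂ y ∈ t, (V y ×ˢ univ ∪ univ ×ˢ (W y)ᶜ)
  have hT : MeasurableSet T :=
    (MeasurableSet.univ.prod hU.isClosed_compl.measurableSet).inter <|
      .biInter htfin.countable fun y hyt =>
        ((hVopen y (htU hyt)).measurableSet.prod .univ).union
          (MeasurableSet.univ.prod (hWopen y (htU hyt)).measurableSet.compl)
  have hTfiber : ∀ y', ν ((·, y') ⁻¹' T) ≤ ε := by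
    intro y'
    by_cases hy' : y' ∈ U
    · have : (·, y') ⁻¹' T = ∅ := by ext x; simp [T, hy']
      simp [this]
    · obtain ⟨y, hyt, hy'W⟩ := mem_iUnion₂.mp (hcover hy')
      refine (measure_mono fun x hx => ?_).trans (hVε y (htU hyt)).le
      rcases mem_iInter₂.mp hx.2 y hyt with ⟨hxV, -⟩ | ⟨-, hy'W'⟩
      exacts [hxV, absurd hy'W hy'W']
  have hST : S ⊆ (univ ×ˢ U) ∪ T := by
    rintro ⟨x, y'⟩ hxy
    by_cases hy' : y' ∈ U
    · exact Or.inl ⟨mem_univ x, hy'⟩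
    · refine Or.inr ⟨⟨mem_univ x, hy'⟩, mem_iInter₂.mpr fun y hyt => ?_⟩
      by_cases hy'W : y' ∈ W y
      · exact Or.inl ⟨hWV y (htU hyt) y' hy'W hxy, mem_univ y'⟩
      · exact Or.inr ⟨mem_univ x, hy'W⟩
  calc ν.prod μ S ≤ ν.prod μ (univ ×ˢ U) + ν.prod μ T :=
        (measure_mono hST).trans (measure_union_le _ _)
    _ ≤ ν univ * ε + ε * μ univ := by
      rw [Measure.prod_prod]
      gcongr
      exact ν.prod_le_of_preimage_mk_le μ hT hTfiber
    _ = ε * (ν univ + μ univ) := by ring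

theorem Subgroup.measure_setOf_commute_eq_zero {G : Type*} [Group G] [TopologicalSpace G]
    [IsTopologicalGroup G] [T2Space G] [MeasurableSpace G] [BorelSpace G] {K : Subgroup G}
    [LocallyCompactSpace K] [ConnectedSpace K] (ν : Measure K) [ν.IsHaarMeasure] [ν.InnerRegular]
    {g : G} (hg : g ∉ Subgroup.centralizer (K : Set G)) :
    ν {k : K | (k : G) * g = g * k} = 0 := by
  set H : Subgroup K := (Subgroup.centralizer {g}).subgroupOf K
  have hH : (H : Set K) = {k : K | (k : G) * g = g * k} := by
    ext k
    simp [H, Subgroup.mem_subgroupOf, Subgroup.mem_centralizer_singleton_iff, eq_comm]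
  have hHclosed : IsClosed (H : Set K) :=
    (Set.isClosed_centralizer {g}).preimage continuous_subtype_val
  by_contra hpos
  refine hg (Subgroup.mem_centralizer_iff.mpr fun k hk => ?_)
  have hkH : (⟨k, hk⟩ : K) ∈ (H : Set K) := by
    rw [H.eq_top_of_measure_pos ν hHclosed.measurableSet (hH ▸ pos_iff_ne_zero.mpr hpos)]
    trivial
  rwa [hH] at hkH

theorem Subgroup.isOpen_centralizer_of_haarCommProb_pos {G : Type*} [Group G]
    [TopologicalSpace G] [IsTopologicalGroup G] [CompactSpace G] [T2Space G] [MeasurableSpace G]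
    [BorelSpace G] (μ : Measure G) [μ.IsHaarMeasure] {K : Subgroup G} [CompactSpace K]
    [ConnectedSpace K] (ν : Measure K) [ν.IsHaarMeasure] (h : 0 < haarCommProb K ν μ) :
    IsOpen (Subgroup.centralizer (K : Set G) : Set G) := by
  set C := Subgroup.centralizer (K : Set G)
  have hCclosed : IsClosed (C : Set G) := Set.isClosed_centralizer _
  by_contra hCopen
  have hμC : μ C = 0 := by
    by_contra hpos
    exact hCopen (C.isOpen_of_measure_pos μ hCclosed.measurableSet (pos_iff_ne_zero.mpr hpos))
  have hcomm : IsClosed {p : K × G | (p.1 : G) * p.2 = p.2 * (p.1 : G)} :=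
    isClosed_eq (by fun_prop) (by fun_prop)
  exact h.ne' (hcomm.measure_prod_eq_zero ν μ hμC fun _ hg =>
    Subgroup.measure_setOf_commute_eq_zero ν hg)

theorem stmt15_general {G : Type*} [Group G] [TopologicalSpace G] [IsTopologicalGroup G]
    [CompactSpace G] [T2Space G] [MeasurableSpace G] [BorelSpace G]
    (μ : Measure G) [μ.IsHaarMeasure]
    (ν : Measure (Subgroup.connectedComponentOfOne G)) [ν.IsHaarMeasure]
    (h : 0 < haarCommProb (Subgroup.connectedComponentOfOne G) ν μ) :
    IsOpen ((Subgroup.centralizer (Subgroup.connectedComponentOfOne G : Set G) : Set G)) := by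
  have : CompactSpace (Subgroup.connectedComponentOfOne G) :=
    isCompact_iff_compactSpace.mp isClosed_connectedComponent.isCompact
  have : ConnectedSpace (Subgroup.connectedComponentOfOne G) :=
    Subtype.connectedSpace isConnected_connectedComponent
  exact Subgroup.isOpen_centralizer_of_haarCommProb_pos μ ν h

theorem stmt15 {G : Type*} [Group G] [TopologicalSpace G] [IsTopologicalGroup G]
    [CompactSpace G] [T2Space G] [MeasurableSpace G] [BorelSpace G]
    (μ : Measure G) [μ.IsHaarMeasure] [IsProbabilityMeasure μ]
    (ν : Measure (Subgroup.connectedComponentOfOne G)) [ν.IsHaarMeasure]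
    [IsProbabilityMeasure ν]
    (h : 0 < haarCommProb (Subgroup.connectedComponentOfOne G) ν μ) :
    IsOpen ((Subgroup.centralizer (Subgroup.connectedComponentOfOne G : Set G) : Set G)) :=
  stmt15_general μ ν h
end

section
/- Let G be a compact group with identity component G₀. If the centralizer C_G(G₀) is open in G, then there exists ε > 0 such that Pr(⟨x⟩, G) ≥ ε for every x ∈ G₀; in fact one may take ε = [G : C_G(G₀)]⁻¹. -/
/-!
For `x ∈ G₀` the closed subgroup `⟨x⟩` lies in the closed subgroup `G₀`, so it commutes
with all of `C = C_G(G₀)`; hence `Pr(⟨x⟩, G)` is at least the Haar measure of `C`. Since `C` is an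
open subgroup of the compact group `G`, it has finite index, and the finitely many translates of
`C` cover `G`, giving `μ C ≥ [G : C]⁻¹`.
-/

open MeasureTheory
open scoped ENNReal Pointwise

namespace Subgroup

variable {G : Type*} [Group G] [MeasurableSpace G]

theorem measure_univ_le_index_mul_measure (μ : Measure G) [SMulInvariantMeasure G G μ]
    (H : Subgroup G) [H.FiniteIndex] : μ Set.univ ≤ H.index * μ H :=
  calc μ Set.univ = μ (⋃ q : G ⧸ H, q.out • (H : Set G)) := by
        rw [← QuotientGroup.univ_eq_iUnion_smul]
    _ ≤ ∑' q : G ⧸ H, μ (q.out • (H : Set G)) := measure_iUnion_le _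
    _ = H.index * μ H := by
        simp only [measure_smul, ENNReal.tsum_const, ENat.card_eq_coe_natCard, index]
        rfl

theorem inv_index_le_measure (μ : Measure G) [SMulInvariantMeasure G G μ]
    [IsProbabilityMeasure μ] (H : Subgroup G) [H.FiniteIndex] :
    (H.index : ℝ≥0∞)⁻¹ ≤ μ H := by
  rw [ENNReal.inv_le_iff_le_mul (by simp) (by simp), ← measure_univ (μ := μ)]
  exact H.measure_univ_le_index_mul_measure μ

end Subgroup

theorem mul_measure_centralizer_le_haarCommProb {G : Type*} [Group G] [MeasurableSpace G]
    (K : Subgroup G) (ν : Measure K) (μ : Measure G) [SFinite μ] :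
    ν Set.univ * μ (Subgroup.centralizer (K : Set G)) ≤ haarCommProb K ν μ := by
  rw [← Measure.prod_prod]
  refine measure_mono ?_
  rintro ⟨k, g⟩ ⟨-, hg⟩
  exact Subgroup.mem_centralizer_iff.mp hg k k.2

theorem stmt16_general {G : Type*} [Group G] [TopologicalSpace G] [IsTopologicalGroup G]
    [CompactSpace G] [MeasurableSpace G] [BorelSpace G]
    (μ : Measure G) [μ.IsHaarMeasure] [IsProbabilityMeasure μ]
    (h : IsOpen ((Subgroup.centralizer (Subgroup.connectedComponentOfOne G : Set G) : Set G))) :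
    (Subgroup.centralizer (Subgroup.connectedComponentOfOne G : Set G)).index ≠ 0 ∧
      ∀ x ∈ Subgroup.connectedComponentOfOne G,
        ∀ (ν : Measure ((Subgroup.zpowers x).topologicalClosure)),
          ν.IsHaarMeasure → IsProbabilityMeasure ν →
          ((Subgroup.centralizer (Subgroup.connectedComponentOfOne G : Set G)).index :
              ℝ≥0∞)⁻¹ ≤
            haarCommProb ((Subgroup.zpowers x).topologicalClosure) ν μ := by
  set G₀ := Subgroup.connectedComponentOfOne G
  have : Finite (G ⧸ Subgroup.centralizer (G₀ : Set G)) := Subgroup.quotient_finite_of_isOpen _ h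
  have : (Subgroup.centralizer (G₀ : Set G)).FiniteIndex := Subgroup.finiteIndex_of_finite_quotient
  refine ⟨Subgroup.FiniteIndex.index_ne_zero, fun x hx ν _ _ => ?_⟩
  have hKG₀ : (Subgroup.zpowers x).topologicalClosure ≤ G₀ :=
    Subgroup.topologicalClosure_minimal _ (Subgroup.zpowers_le.mpr hx) isClosed_connectedComponent
  calc ((Subgroup.centralizer (G₀ : Set G)).index : ℝ≥0∞)⁻¹
      ≤ μ (Subgroup.centralizer (G₀ : Set G)) := Subgroup.inv_index_le_measure μ _
    _ ≤ μ (Subgroup.centralizer ((Subgroup.zpowers x).topologicalClosure : Set G)) :=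
        measure_mono (Subgroup.centralizer_le hKG₀)
    _ = ν Set.univ * μ (Subgroup.centralizer ((Subgroup.zpowers x).topologicalClosure : Set G)) := by
        rw [measure_univ, one_mul]
    _ ≤ haarCommProb _ ν μ := mul_measure_centralizer_le_haarCommProb _ ν μ

theorem stmt16 {G : Type*} [Group G] [TopologicalSpace G] [IsTopologicalGroup G]
    [CompactSpace G] [T2Space G] [MeasurableSpace G] [BorelSpace G]
    (μ : Measure G) [μ.IsHaarMeasure] [IsProbabilityMeasure μ]
    (h : IsOpen ((Subgroup.centralizer (Subgroup.connectedComponentOfOne G : Set G) : Set G))) :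
    (Subgroup.centralizer (Subgroup.connectedComponentOfOne G : Set G)).index ≠ 0 ∧
      ∀ x ∈ Subgroup.connectedComponentOfOne G,
        ∀ (ν : Measure ((Subgroup.zpowers x).topologicalClosure)),
          ν.IsHaarMeasure → IsProbabilityMeasure ν →
          ((Subgroup.centralizer (Subgroup.connectedComponentOfOne G : Set G)).index :
              ℝ≥0∞)⁻¹ ≤
            haarCommProb ((Subgroup.zpowers x).topologicalClosure) ν μ :=
  stmt16_general μ h
end
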